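/- Let X be a simplicial complex, I a discrete set (a set of vertices with no edges between them), and Y ⊆ I * X a subcomplex containing both I and X. If for every i ∈ I the inclusion lk_Y(i) ↪ X is a homotopy equivalence, then the inclusion Y ↪ I * X is a homotopy equivalence. -/

import Mathlib

noncomputable section
attribute [local instance] Classical.propDecidable

/-- An abstract simplicial complex on a vertex type `V`. -/
structure AbsSC (V : Type) where
  faces : Set (Finset V)
  not_empty_mem : ∅ ∉ faces
  down_closed : ∀ {s t : Finset V}, s ∈ faces → t ⊆ s → t.Nonempty → t ∈ faces

namespace AbsSC

variable {V : Type}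

/-- The vertex set of a simplicial complex. -/
def vertexSet (K : AbsSC V) : Set V := {v | {v} ∈ K.faces}

/-- A simplicial complex is finite dimensional if the cardinality of its faces is bounded. -/
def FinDim (K : AbsSC V) : Prop := ∃ d : ℕ, ∀ s ∈ K.faces, s.card ≤ d

/-- A simplicial complex is countable if its set of faces is countable. -/
def Ctbl (K : AbsSC V) : Prop := Set.Countable K.faces

/-- The full subcomplex generated by a set `A` of vertices. -/
def full (K : AbsSC V) (A : Set V) : AbsSC V where
  faces := {s | s ∈ K.faces ∧ ↑s ⊆ A}
  not_empty_mem := fun h => K.not_empty_mem h.1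
  down_closed := fun hs hts hne =>
    ⟨K.down_closed hs.1 hts hne, (Finset.coe_subset.mpr hts).trans hs.2⟩

/-- The link of a cell `σ`. -/
def link (K : AbsSC V) (σ : Finset V) : AbsSC V where
  faces := {t | t ∈ K.faces ∧ Disjoint t σ ∧ t ∪ σ ∈ K.faces}
  not_empty_mem := fun h => K.not_empty_mem h.1
  down_closed := fun hs hts hne =>
    ⟨K.down_closed hs.1 hts hne, Finset.disjoint_of_subset_left hts hs.2.1,
      K.down_closed hs.2.2 (Finset.union_subset_union_left hts)
        (hne.mono Finset.subset_union_left)⟩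

/-! ### Simplicial homology, via cycles modulo boundaries. -/

/-- The `k`-simplices of `K` (having `k+1` vertices). -/
def Simp (K : AbsSC V) (k : ℕ) : Type := {s : Finset V // s ∈ K.faces ∧ s.card = k + 1}

/-- Simplicial `k`-chains with integer coefficients. -/
abbrev Ch (K : AbsSC V) (k : ℕ) : Type := Simp K k →₀ ℤ

/-- The `i`-th face of a `(k+1)`-simplex, obtained by deleting its `i`-th vertex
(with respect to an auxiliary well-ordering of the vertices). -/
def faceAt {K : AbsSC V} {k : ℕ} (s : Simp K (k+1)) (i : Fin (k+2)) : Simp K k :=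
  letI : LinearOrder V := IsWellOrder.linearOrder WellOrderingRel
  let e : V := s.1.orderEmbOfFin s.2.2 i
  have hmem : e ∈ s.1 := s.1.orderEmbOfFin_mem s.2.2 i
  have hc : (s.1.erase e).card = k + 1 := by
    rw [Finset.card_erase_of_mem hmem, s.2.2]; omega

  ⟨s.1.erase e,
    K.down_closed s.2.1 (Finset.erase_subset _ _)
      (Finset.card_pos.mp (by rw [hc]; exact k.succ_pos)), hc⟩

/-- The simplicial boundary map. -/
def bdry (K : AbsSC V) (k : ℕ) : Ch K (k+1) →ₗ[ℤ] Ch K k :=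
  Finsupp.lsum ℤ fun s => LinearMap.toSpanSingleton ℤ (Ch K k)
    (∑ i : Fin (k+2), ((-1 : ℤ) ^ (i : ℕ)) • Finsupp.single (faceAt s i) (1 : ℤ))

/-- The augmentation map on `0`-chains. -/
def aug (K : AbsSC V) : Ch K 0 →ₗ[ℤ] ℤ :=
  Finsupp.lsum ℤ fun _ => LinearMap.id

/-- Reduced cycles. -/
def cyc (K : AbsSC V) : (k : ℕ) → Submodule ℤ (Ch K k)
  | 0 => LinearMap.ker (aug K)
  | (k+1) => LinearMap.ker (bdry K k)

/-- Reduced simplicial homology: cycles modulo boundaries. -/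
abbrev RH (K : AbsSC V) (k : ℕ) :=
  (cyc K k) ⧸ (Submodule.comap (cyc K k).subtype (LinearMap.range (bdry K k)))

/-- `K` is `n`-acyclic if its reduced integral homology vanishes in degrees `≤ n`. -/
def IsAcyclic (K : AbsSC V) (n : ℤ) : Prop :=
  ∀ k : ℕ, (k : ℤ) ≤ n → Subsingleton (RH K k)

/-! ### Relative simplicial homology of a pair `(X, Y)` with `Y` a subcomplex of `X`. -/

/-- Relative simplices: simplices of `X` not in `Y`. -/
def RelSimp (X Y : AbsSC V) (k : ℕ) : Type :=
  {s : Finset V // s ∈ X.faces ∧ s ∉ Y.faces ∧ s.card = k + 1}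

/-- Relative chains. -/
abbrev RelCh (X Y : AbsSC V) (k : ℕ) : Type := RelSimp X Y k →₀ ℤ

/-- Projection of chains onto relative chains. -/
def projRel (X Y : AbsSC V) (k : ℕ) : Ch X k →ₗ[ℤ] RelCh X Y k :=
  Finsupp.lsum ℤ fun s => LinearMap.toSpanSingleton ℤ (RelCh X Y k)
    (letI : Decidable (s.1 ∈ Y.faces) := Classical.propDecidable _
     if h : s.1 ∈ Y.faces then 0 else Finsupp.single ⟨s.1, s.2.1, h, s.2.2⟩ 1)

/-- Inclusion of relative chains into chains. -/
def injRel (X Y : AbsSC V) (k : ℕ) : RelCh X Y k →ₗ[ℤ] Ch X k :=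
  Finsupp.lsum ℤ fun s => LinearMap.toSpanSingleton ℤ (Ch X k)
    (Finsupp.single ⟨s.1, s.2.1, s.2.2.2⟩ 1)

/-- The relative boundary map. -/
def relBdry (X Y : AbsSC V) (k : ℕ) : RelCh X Y (k+1) →ₗ[ℤ] RelCh X Y k :=
  (projRel X Y k) ∘ₗ (bdry X k) ∘ₗ (injRel X Y (k+1))

/-- Relative cycles. -/
def relCyc (X Y : AbsSC V) : (k : ℕ) → Submodule ℤ (RelCh X Y k)
  | 0 => ⊤
  | (k+1) => LinearMap.ker (relBdry X Y k)

/-- Relative simplicial homology `H_k(X, Y; ℤ)`. -/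
abbrev RelH (X Y : AbsSC V) (k : ℕ) :=
  (relCyc X Y k) ⧸ (Submodule.comap (relCyc X Y k).subtype (LinearMap.range (relBdry X Y k)))

/-- The pair `(X, Y)` is relatively `n`-acyclic if `H_k(X, Y; ℤ) = 0` for `k ≤ n`. -/
def RelAcyclic (X Y : AbsSC V) (n : ℤ) : Prop :=
  ∀ k : ℕ, (k : ℤ) ≤ n → Subsingleton (RelH X Y k)

/-! ### PL-Morse theory. -/

/-- A `W`-constant cell: `W` is positive and constant on the vertices of `σ`. -/
def WConst (K : AbsSC V) (W : V → ℕ) (σ : Finset V) : Prop :=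
  σ ∈ K.faces ∧ ∃ c : ℕ, 0 < c ∧ ∀ v ∈ σ, W v = c

/-- The descending link of a cell `σ`: the subcomplex of the link of `σ` generated by the
vertices of weight smaller than the weight of every vertex of `σ`. -/
def descLink (K : AbsSC V) (W : V → ℕ) (σ : Finset V) : AbsSC V :=
  (K.link σ).full {w | ∀ v ∈ σ, W w < W v}

/-- The min-set `M(W)`: the full subcomplex on the vertices of weight `0`. -/
def minSet (K : AbsSC V) (W : V → ℕ) : AbsSC V := K.full {v | W v = 0}

/-- `W` is an `n`-acyclic PL-Morse function: the descending link of every `W`-constant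
`k`-cell is `(n-k)`-acyclic. -/
def MorseAcyclic (K : AbsSC V) (W : V → ℕ) (n : ℤ) : Prop :=
  ∀ (k : ℕ) (σ : Finset V), σ.card = k + 1 → WConst K W σ →
    IsAcyclic (descLink K W σ) (n - k)

end AbsSC

/-! ### Geometric realization and connectivity. -/

namespace AbsSC

variable {V : Type}

/-- The geometric realization of an abstract simplicial complex, as a subspace of `V → ℝ`. -/
abbrev GR (K : AbsSC V) : Type :=
  {f : V → ℝ // ∃ s ∈ K.faces, (∀ v ∉ s, f v = 0) ∧ (∑ v ∈ s, f v = 1) ∧ ∀ v, 0 ≤ f v}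

/-- The continuous inclusion of realizations induced by an inclusion of subcomplexes. -/
def inclGR {K K' : AbsSC V} (h : K.faces ⊆ K'.faces) : C(GR K, GR K') where
  toFun p := ⟨p.1, p.2.imp fun s hs => ⟨h hs.1, hs.2⟩⟩
  continuous_toFun := by
    apply Continuous.subtype_mk
    exact continuous_subtype_val

/-- The subset of the realization of `X` corresponding to a subcomplex `Y`. -/
def GRsub (X Y : AbsSC V) : Set (GR X) :=
  {p | ∃ s ∈ Y.faces, (∀ v ∉ s, p.1 v = 0)}

end AbsSC

/-- A topological space is `n`-connected (`n : ℤ`) if it is nonempty (when `n ≥ 0`) and all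
its homotopy groups `π_k` for `0 ≤ k ≤ n` are trivial at every basepoint. -/
def ConnT (X : Type) [TopologicalSpace X] (n : ℤ) : Prop :=
  (0 ≤ n → Nonempty X) ∧
    ∀ k : ℕ, (k : ℤ) ≤ n → ∀ x : X, Subsingleton (HomotopyGroup (Fin k) X x)

/-- The pair `(X, Y)` is relatively `n`-connected: `π_j(X, Y) = 0` for `j ≤ n`, formulated
via maps of the pair `(D^j, S^{j-1})` into `(X, Y)`. -/
def RelConnT (X : Type) [TopologicalSpace X] (Y : Set X) (n : ℤ) : Prop :=
  ∀ j : ℕ, (j : ℤ) ≤ n →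
    ∀ f : C(↥(Metric.closedBall (0 : EuclideanSpace ℝ (Fin j)) 1), X),
      (∀ p : ↥(Metric.closedBall (0 : EuclideanSpace ℝ (Fin j)) 1),
          (p : EuclideanSpace ℝ (Fin j)) ∈ Metric.sphere (0 : EuclideanSpace ℝ (Fin j)) 1 →
            f p ∈ Y) →
      ∃ g : C(↥(Metric.closedBall (0 : EuclideanSpace ℝ (Fin j)) 1), X),
        (∀ p, g p ∈ Y) ∧
          ContinuousMap.HomotopicRel f g
            {p | (p : EuclideanSpace ℝ (Fin j)) ∈ Metric.sphere (0 : EuclideanSpace ℝ (Fin j)) 1}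

/-- A continuous map is a homotopy equivalence. -/
def IsHEquiv {X Y : Type} [TopologicalSpace X] [TopologicalSpace Y] (f : C(X, Y)) : Prop :=
  ∃ g : C(Y, X), (f.comp g).Homotopic (ContinuousMap.id Y) ∧
    (g.comp f).Homotopic (ContinuousMap.id X)

namespace AbsSC

variable {V : Type}

/-- The simplicial join `I * X` of a discrete set `I` of vertices with a complex `X`:
faces are (nonempty) unions of at most one vertex of `I` with a face of `X` (or with
nothing). -/
def joinDisc (I : Set V) (X : AbsSC V) : AbsSC V where
  faces := {s | s.Nonempty ∧ ∃ a b : Finset V,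
    s = a ∪ b ∧ ↑a ⊆ I ∧ a.card ≤ 1 ∧ (b = ∅ ∨ b ∈ X.faces)}
  not_empty_mem := fun h => Finset.not_nonempty_empty h.1
  down_closed := by
    rintro s t ⟨-, a, b, rfl, haI, hacard, hb⟩ hts hne
    refine ⟨hne, t ∩ a, t ∩ b, ?_, ?_, ?_, ?_⟩
    · ext x
      simp only [Finset.mem_union, Finset.mem_inter]
      constructor
      · intro hx
        rcases Finset.mem_union.mp (hts hx) with h | h
        · exact Or.inl ⟨hx, h⟩
        · exact Or.inr ⟨hx, h⟩
      · rintro (⟨h, -⟩ | ⟨h, -⟩) <;> exact h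
    · exact (Finset.coe_subset.mpr Finset.inter_subset_right).trans haI
    · exact le_trans (Finset.card_le_card Finset.inter_subset_right) hacard
    · rcases hb with rfl | hb
      · exact Or.inl (Finset.inter_empty t)
      · by_cases h : (t ∩ b).Nonempty
        · exact Or.inr (X.down_closed hb Finset.inter_subset_right h)
        · exact Or.inl (Finset.not_nonempty_iff_eq_empty.mp h)

end AbsSC


/-! ### Auxiliary machinery for Statement 7. -/

open AbsSC

/-- Bundled data for the proof of Statement 7. -/
structure S7Data (V : Type) where
  X : AbsSC V
  I : Set V
  Y : AbsSC V
  hdisj : ∀ v ∈ I, v ∉ X.vertexSet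
  hYsub : Y.faces ⊆ (joinDisc I X).faces
  hI : ∀ i ∈ I, ({i} : Finset V) ∈ Y.faces
  hX : X.faces ⊆ Y.faces
  hsub : ∀ i, i ∈ I → (Y.link {i}).faces ⊆ X.faces
  gm : ∀ i, (hi : i ∈ I) → C(GR X, GR (Y.link {i}))
  Gh : ∀ i, (hi : i ∈ I) →
    ContinuousMap.Homotopy ((inclGR (hsub i hi)).comp (gm i hi)) (ContinuousMap.id _)
  Kh : ∀ i, (hi : i ∈ I) →
    ContinuousMap.Homotopy ((gm i hi).comp (inclGR (hsub i hi))) (ContinuousMap.id _)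

namespace S7Data

variable {V : Type} (S : S7Data V)

/-- The join complex. -/
def J : AbsSC V := joinDisc S.I S.X

/-- Elements of realizations have nonnegative coordinates. -/
lemma coord_nonneg {K : AbsSC V} (p : GR K) (v : V) : 0 ≤ p.1 v := by
  obtain ⟨s, _, _, _, h⟩ := p.2; exact h v

lemma sum_face {K : AbsSC V} (p : GR K) :
    ∃ s ∈ K.faces, (∀ v ∉ s, p.1 v = 0) ∧ (∑ v ∈ s, p.1 v = 1) ∧ ∀ v, 0 ≤ p.1 v := p.2

/-- Coordinates are at most one. -/
lemma coord_le_one {K : AbsSC V} (p : GR K) (v : V) : p.1 v ≤ 1 := by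
  obtain ⟨s, _, h0, h1, hpos⟩ := p.2
  by_cases hv : v ∈ s
  · calc p.1 v ≤ ∑ w ∈ s, p.1 w := Finset.single_le_sum (fun w _ => hpos w) hv
    _ = 1 := h1
  · rw [h0 v hv]; norm_num

/-- A vertex of a face of `X` is not in `I`. -/
lemma not_mem_I_of_mem_Xface {s : Finset V} (hs : s ∈ S.X.faces) {v : V} (hv : v ∈ s) :
    v ∉ S.I := by
  intro hvI
  exact S.hdisj v hvI (S.X.down_closed hs (Finset.singleton_subset_iff.mpr hv) ⟨v, Finset.mem_singleton_self v⟩)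

/-- In a face of the join, there is at most one vertex from `I`. -/
lemma faceI {s : Finset V} (hs : s ∈ S.J.faces) {i j : V} (hi : i ∈ s) (hiI : i ∈ S.I)
    (hj : j ∈ s) (hjI : j ∈ S.I) : i = j := by
  obtain ⟨-, a, b, rfl, haI, hacard, hb⟩ := hs
  have hia : i ∈ a := by
    rcases Finset.mem_union.mp hi with h | h
    · exact h
    · rcases hb with rfl | hb
      · exact absurd h (Finset.notMem_empty i)
      · exact absurd hiI (S.not_mem_I_of_mem_Xface hb h)
  have hja : j ∈ a := by
    rcases Finset.mem_union.mp hj with h | h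
    · exact h
    · rcases hb with rfl | hb
      · exact absurd h (Finset.notMem_empty j)
      · exact absurd hjI (S.not_mem_I_of_mem_Xface hb h)
  exact Finset.card_le_one.mp hacard i hia j hja

/-- A point of the join has at most one positive `I`-coordinate. -/
lemma uniqI (p : GR S.J) {i j : V} (hi : i ∈ S.I) (hj : j ∈ S.I)
    (hpi : 0 < p.1 i) (hpj : 0 < p.1 j) : i = j := by
  obtain ⟨s, hs, h0, -, -⟩ := p.2
  have his : i ∈ s := by by_contra h; rw [h0 i h] at hpi; exact lt_irrefl _ hpi
  have hjs : j ∈ s := by by_contra h; rw [h0 j h] at hpj; exact lt_irrefl _ hpj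
  exact S.faceI hs his hi hjs hj

/-- The total `I`-mass of a point of the join. -/
noncomputable def tI (p : GR S.J) : ℝ :=
  if h : ∃ i ∈ S.I, 0 < p.1 i then p.1 h.choose else 0

lemma tI_nonneg (p : GR S.J) : 0 ≤ S.tI p := by
  unfold tI; split
  · exact coord_nonneg p _
  · exact le_refl 0

lemma tI_le_one (p : GR S.J) : S.tI p ≤ 1 := by
  unfold tI; split
  · exact coord_le_one p _
  · norm_num

lemma tI_eq (p : GR S.J) {i : V} (hi : i ∈ S.I) (hpi : 0 < p.1 i) : S.tI p = p.1 i := by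
  have h : ∃ i ∈ S.I, 0 < p.1 i := ⟨i, hi, hpi⟩
  rw [tI, dif_pos h]
  have := h.choose_spec
  rw [S.uniqI p this.1 hi this.2 hpi]

lemma coord_le_tI (p : GR S.J) {i : V} (hi : i ∈ S.I) : p.1 i ≤ S.tI p := by
  by_cases h : 0 < p.1 i
  · rw [S.tI_eq p hi h]
  · push_neg at h; exact h.trans (S.tI_nonneg p)

lemma coordI_eq_zero (p : GR S.J) {i j : V} (hi : i ∈ S.I) (hpi : 0 < p.1 i)
    (hj : j ∈ S.I) (hij : j ≠ i) : p.1 j = 0 := by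
  by_contra h
  have : 0 < p.1 j := lt_of_le_of_ne (coord_nonneg p j) (Ne.symm h)
  exact hij (S.uniqI p hj hi this hpi)

/-- Decomposition of a point of the join: the `X`-part support. -/
lemma decomp (p : GR S.J) : ∃ b : Finset V, (∀ v ∈ b, v ∉ S.I) ∧
    (∀ v, v ∉ S.I → v ∉ b → p.1 v = 0) ∧ (∑ v ∈ b, p.1 v = 1 - S.tI p) ∧
    (b.Nonempty → b ∈ S.X.faces) := by
  obtain ⟨s, hs, h0, h1, hpos⟩ := p.2
  refine ⟨s.filter (fun v => v ∉ S.I), fun v hv => (Finset.mem_filter.mp hv).2, ?_, ?_, ?_⟩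
  · intro v hvI hvb
    by_cases hvs : v ∈ s
    · exact absurd (Finset.mem_filter.mpr ⟨hvs, hvI⟩) hvb
    · exact h0 v hvs
  · have hsplit : s = s.filter (fun v => v ∉ S.I) ∪ s.filter (fun v => v ∈ S.I) := by
      ext v
      simp only [Finset.mem_union, Finset.mem_filter]
      tauto
    have hdisj2 : Disjoint (s.filter (fun v => v ∉ S.I)) (s.filter (fun v => v ∈ S.I)) := by
      rw [Finset.disjoint_left]
      intro v hv1 hv2
      exact (Finset.mem_filter.mp hv1).2 (Finset.mem_filter.mp hv2).2
    have hsum : ∑ v ∈ s.filter (fun v => v ∉ S.I), p.1 v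
        + ∑ v ∈ s.filter (fun v => v ∈ S.I), p.1 v = 1 := by
      rw [← Finset.sum_union hdisj2, ← hsplit, h1]
    have hIsum : ∑ v ∈ s.filter (fun v => v ∈ S.I), p.1 v = S.tI p := by
      by_cases h : ∃ i ∈ S.I, 0 < p.1 i
      · obtain ⟨i, hiI, hpi⟩ := h
        have his : i ∈ s := by by_contra hh; rw [h0 i hh] at hpi; exact lt_irrefl _ hpi
        rw [S.tI_eq p hiI hpi]
        refine Finset.sum_eq_single_of_mem i (Finset.mem_filter.mpr ⟨his, hiI⟩) ?_
        intro j hj hij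
        exact S.coordI_eq_zero p hiI hpi (Finset.mem_filter.mp hj).2 hij
      · push_neg at h
        rw [tI, dif_neg (by push_neg; exact h)]
        refine Finset.sum_eq_zero fun v hv => ?_
        exact le_antisymm (h v (Finset.mem_filter.mp hv).2) (hpos v)
    linarith
  · intro hne
    obtain ⟨-, a, b, hsab, haI, -, hb⟩ := hs
    have hsub2 : s.filter (fun v => v ∉ S.I) ⊆ b := by
      intro v hv
      obtain ⟨hvs, hvI⟩ := Finset.mem_filter.mp hv
      rw [hsab] at hvs
      rcases Finset.mem_union.mp hvs with h | h
      · exact absurd (haI h) hvI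
      · exact h
    rcases hb with rfl | hb
    · obtain ⟨v, hv⟩ := hne
      exact absurd (hsub2 hv) (Finset.notMem_empty v)
    · exact S.X.down_closed hb hsub2 hne

/-- Mass bound: sums of non-`I` coordinates are bounded by `1 - tI`. -/
lemma mass_bound (p : GR S.J) (c : Finset V) (hc : ∀ v ∈ c, v ∉ S.I) :
    ∑ v ∈ c, p.1 v ≤ 1 - S.tI p := by
  obtain ⟨b, hbI, hb0, hbsum, -⟩ := S.decomp p
  have h1 : ∑ v ∈ c, p.1 v = ∑ v ∈ c ∩ b, p.1 v := by
    refine (Finset.sum_subset Finset.inter_subset_left ?_).symm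
    intro v hv hvnb
    refine hb0 v (hc v hv) ?_
    intro hvb
    exact hvnb (Finset.mem_inter.mpr ⟨hv, hvb⟩)
  rw [h1, ← hbsum]
  exact Finset.sum_le_sum_of_subset_of_nonneg Finset.inter_subset_right
    (fun v _ _ => coord_nonneg p v)

/-- `tI` is continuous. -/
lemma tI_cont : Continuous S.tI := by
  rw [continuous_iff_continuousAt]
  intro p₀
  obtain ⟨b₀, hbI, hb0, hbsum, -⟩ := S.decomp p₀
  have hupper : ∀ p : GR S.J, S.tI p ≤ 1 - ∑ v ∈ b₀, p.1 v := by
    intro p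
    have := S.mass_bound p b₀ hbI
    linarith
  have huppercont : Continuous fun p : GR S.J => 1 - ∑ v ∈ b₀, p.1 v := by
    refine Continuous.sub continuous_const ?_
    exact continuous_finset_sum _ fun v _ => (continuous_apply v).comp continuous_subtype_val
  have hupperlim : Filter.Tendsto (fun p : GR S.J => 1 - ∑ v ∈ b₀, p.1 v) (nhds p₀)
      (nhds (S.tI p₀)) := by
    have : (1 : ℝ) - ∑ v ∈ b₀, p₀.1 v = S.tI p₀ := by linarith [hbsum]
    rw [← this]
    exact huppercont.continuousAt
  by_cases h : ∃ i ∈ S.I, 0 < p₀.1 i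
  · obtain ⟨i₀, hi₀, hp₀⟩ := h
    have hlow : ∀ p : GR S.J, p.1 i₀ ≤ S.tI p := fun p => S.coord_le_tI p hi₀
    have hlowlim : Filter.Tendsto (fun p : GR S.J => p.1 i₀) (nhds p₀) (nhds (S.tI p₀)) := by
      rw [S.tI_eq p₀ hi₀ hp₀]
      exact ((continuous_apply i₀).comp continuous_subtype_val).continuousAt
    exact tendsto_of_tendsto_of_tendsto_of_le_of_le hlowlim hupperlim hlow hupper
  · have htI0 : S.tI p₀ = 0 := by rw [tI, dif_neg h]
    have hlowlim : Filter.Tendsto (fun _ : GR S.J => (0:ℝ)) (nhds p₀) (nhds (S.tI p₀)) := by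
      rw [htI0]; exact tendsto_const_nhds
    exact tendsto_of_tendsto_of_tendsto_of_le_of_le hlowlim hupperlim
      (fun p => S.tI_nonneg p) hupper

/-- The normalized `X`-part of a point of the join. -/
noncomputable def nf (p : GR S.J) : V → ℝ :=
  fun v => if v ∈ S.I then 0 else p.1 v / (1 - S.tI p)

/-- Membership of the normalized part in `GR X`. -/
lemma nf_memX (p : GR S.J) (h1 : S.tI p < 1) :
    ∃ s ∈ S.X.faces, (∀ v ∉ s, S.nf p v = 0) ∧ (∑ v ∈ s, S.nf p v = 1) ∧ ∀ v, 0 ≤ S.nf p v := by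
  obtain ⟨b, hbI, hb0, hbsum, hbX⟩ := S.decomp p
  have hpos : (0:ℝ) < 1 - S.tI p := by linarith
  have hbne : b.Nonempty := by
    rcases Finset.eq_empty_or_nonempty b with rfl | hne
    · simp at hbsum; linarith
    · exact hne
  refine ⟨b, hbX hbne, ?_, ?_, ?_⟩
  · intro v hv
    unfold nf
    by_cases hvI : v ∈ S.I
    · rw [if_pos hvI]
    · rw [if_neg hvI, hb0 v hvI hv, zero_div]
  · have : ∀ v ∈ b, S.nf p v = p.1 v / (1 - S.tI p) := by
      intro v hv; rw [nf, if_neg (hbI v hv)]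
    rw [Finset.sum_congr rfl this, ← Finset.sum_div, hbsum, div_self (ne_of_gt hpos)]
  · intro v
    unfold nf
    by_cases hvI : v ∈ S.I
    · rw [if_pos hvI]
    · rw [if_neg hvI]
      exact div_nonneg (coord_nonneg p v) (le_of_lt hpos)

end S7Data


namespace S7Data

variable {V : Type} (S : S7Data V)

/-- Clamp to `[0,1]`. -/
noncomputable def cl (x : ℝ) : ℝ := max 0 (min 1 x)

lemma cl_cont : Continuous cl := continuous_const.max (continuous_const.min continuous_id)

lemma cl_nonneg (x : ℝ) : 0 ≤ cl x := le_max_left 0 _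

lemma cl_le_one (x : ℝ) : cl x ≤ 1 := max_le (by norm_num) (min_le_left 1 x)

lemma cl_of_nonpos {x : ℝ} (h : x ≤ 0) : cl x = 0 := by
  rw [cl, max_eq_left]; exact (min_le_right 1 x).trans h

lemma cl_of_one_le {x : ℝ} (h : 1 ≤ x) : cl x = 1 := by
  rw [cl, min_eq_left h, max_eq_right]; norm_num

lemma cl_of_mem {x : ℝ} (h0 : 0 ≤ x) (h1 : x ≤ 1) : cl x = x := by
  rw [cl, min_eq_right h1, max_eq_right h0]

lemma cl_zero : cl 0 = 0 := cl_of_nonpos (le_refl 0)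

lemma cl_one : cl 1 = 1 := cl_of_one_le (le_refl 1)

lemma cl_le {c x : ℝ} (hc : 0 ≤ c) (h : x ≤ c) : cl x ≤ c :=
  max_le hc ((min_le_right 1 x).trans h)

lemma cl_ge {c x : ℝ} (hc : c ≤ 1) (h : c ≤ x) : c ≤ cl x :=
  le_trans (le_min hc h) (le_max_right 0 _)

/-- Real number into the unit interval. -/
noncomputable def iic (x : ℝ) : unitInterval := Set.projIcc 0 1 zero_le_one x

lemma iic_cont : Continuous iic := continuous_projIcc (h := zero_le_one)

lemma iic_of_nonpos {x : ℝ} (h : x ≤ 0) : iic x = 0 := by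
  rw [iic, Set.projIcc_of_le_left _ h]; rfl

lemma iic_of_one_le {x : ℝ} (h : 1 ≤ x) : iic x = 1 := by
  rw [iic, Set.projIcc_of_right_le _ h]; rfl

section Maps

variable (i : V) (hi : i ∈ S.I)

/-- Clamped evaluation of the homotopy `G_i`. -/
noncomputable def GEv (s : ℝ) (x : GR S.X) : GR S.X := S.Gh i hi (iic s, x)

/-- Clamped evaluation of the homotopy `K_i`. -/
noncomputable def KEv (s : ℝ) (w : GR (S.Y.link {i})) : GR (S.Y.link {i}) :=
  S.Kh i hi (iic s, w)

lemma GEv_cont : Continuous fun z : ℝ × GR S.X => S.GEv i hi z.1 z.2 :=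
  (S.Gh i hi).continuous.comp ((iic_cont.comp continuous_fst).prodMk continuous_snd)

lemma KEv_cont : Continuous fun z : ℝ × GR (S.Y.link {i}) => S.KEv i hi z.1 z.2 :=
  (S.Kh i hi).continuous.comp ((iic_cont.comp continuous_fst).prodMk continuous_snd)

lemma GEv_nonpos {s : ℝ} (h : s ≤ 0) (x : GR S.X) :
    S.GEv i hi s x = inclGR (S.hsub i hi) (S.gm i hi x) := by
  rw [GEv, iic_of_nonpos h]
  exact (S.Gh i hi).apply_zero x

lemma GEv_one_le {s : ℝ} (h : 1 ≤ s) (x : GR S.X) : S.GEv i hi s x = x := by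
  rw [GEv, iic_of_one_le h]
  exact (S.Gh i hi).apply_one x

lemma KEv_nonpos {s : ℝ} (h : s ≤ 0) (w : GR (S.Y.link {i})) :
    S.KEv i hi s w = S.gm i hi (inclGR (S.hsub i hi) w) := by
  rw [KEv, iic_of_nonpos h]
  exact (S.Kh i hi).apply_zero w

lemma KEv_one_le {s : ℝ} (h : 1 ≤ s) (w : GR (S.Y.link {i})) : S.KEv i hi s w = w := by
  rw [KEv, iic_of_one_le h]
  exact (S.Kh i hi).apply_one w

end Maps

/-- Elements of realizations of subcomplexes of `X` vanish on `I`. -/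
lemma zero_on_I {K : AbsSC V} (hK : K.faces ⊆ S.X.faces) (x : GR K) {v : V} (hv : v ∈ S.I) :
    x.1 v = 0 := by
  obtain ⟨s, hs, h0, -, -⟩ := x.2
  by_cases hvs : v ∈ s
  · exact absurd hv (S.not_mem_I_of_mem_Xface (hK hs) hvs)
  · exact h0 v hvs

lemma X_zero_on_I (x : GR S.X) {v : V} (hv : v ∈ S.I) : x.1 v = 0 :=
  S.zero_on_I (fun _ h => h) x hv

lemma L_zero_on_I {i : V} (hi : i ∈ S.I) (w : GR (S.Y.link {i})) {v : V} (hv : v ∈ S.I) :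
    w.1 v = 0 :=
  S.zero_on_I (S.hsub i hi) w hv

/-- The cone-point constructor. -/
noncomputable def coneF (i : V) (h : ℝ) (x : V → ℝ) : V → ℝ :=
  fun v => (if v = i then h else 0) + (1 - h) * x v

/-- The vertex function. -/
noncomputable def singleF (i : V) : V → ℝ := fun v => if v = i then 1 else 0

lemma I_not_mem_Xface {i : V} (hi : i ∈ S.I) {s : Finset V} (hs : s ∈ S.X.faces) : i ∉ s :=
  fun h => (S.not_mem_I_of_mem_Xface hs h) hi

/-- Membership of cones over link points in `GR Y`. -/
lemma memY_cone {i : V} (hi : i ∈ S.I) {h : ℝ} (h0 : 0 ≤ h) (h1 : h ≤ 1)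
    (w : GR (S.Y.link {i})) :
    ∃ s ∈ S.Y.faces, (∀ v ∉ s, coneF i h w.1 v = 0) ∧ (∑ v ∈ s, coneF i h w.1 v = 1) ∧
      ∀ v, 0 ≤ coneF i h w.1 v := by
  obtain ⟨sw, hsw, hw0, hw1, hwpos⟩ := w.2
  obtain ⟨hswY, hdisjw, hunionY⟩ := hsw
  have hiw : i ∉ sw := by
    intro hisw
    have : i ∈ ({i} : Finset V) := Finset.mem_singleton_self i
    exact Finset.disjoint_left.mp hdisjw hisw this
  have hface : insert i sw ∈ S.Y.faces := by
    have : sw ∪ {i} = insert i sw := by ext v; simp [or_comm]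
    rw [← this]; exact hunionY
  refine ⟨insert i sw, hface, ?_, ?_, ?_⟩
  · intro v hv
    have hvi : v ≠ i := fun he => hv (he ▸ Finset.mem_insert_self i sw)
    have hvsw : v ∉ sw := fun hh => hv (Finset.mem_insert_of_mem hh)
    rw [coneF, if_neg hvi, hw0 v hvsw, mul_zero, add_zero]
  · rw [Finset.sum_insert hiw]
    have hit : coneF i h w.1 i = h := by
      rw [coneF, if_pos rfl, S.L_zero_on_I hi w hi, mul_zero, add_zero]
    have hrest : ∑ v ∈ sw, coneF i h w.1 v = (1 - h) := by
      have : ∀ v ∈ sw, coneF i h w.1 v = (1 - h) * w.1 v := by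
        intro v hv
        have hvi : v ≠ i := fun he => hiw (he ▸ hv)
        rw [coneF, if_neg hvi, zero_add]
      rw [Finset.sum_congr rfl this, ← Finset.mul_sum, hw1, mul_one]
    rw [hit, hrest]; ring
  · intro v
    rw [coneF]
    have : (0:ℝ) ≤ (1 - h) * w.1 v := mul_nonneg (by linarith) (hwpos v)
    by_cases hvi : v = i
    · rw [if_pos hvi]; linarith
    · rw [if_neg hvi]; linarith

/-- Membership of cones over `X` points in `GR J`. -/
lemma memJ_cone {i : V} (hi : i ∈ S.I) {h : ℝ} (h0 : 0 ≤ h) (h1 : h ≤ 1) (x : GR S.X) :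
    ∃ s ∈ S.J.faces, (∀ v ∉ s, coneF i h x.1 v = 0) ∧ (∑ v ∈ s, coneF i h x.1 v = 1) ∧
      ∀ v, 0 ≤ coneF i h x.1 v := by
  obtain ⟨sx, hsx, hx0, hx1, hxpos⟩ := x.2
  have hix : i ∉ sx := S.I_not_mem_Xface hi hsx
  have hface : insert i sx ∈ S.J.faces := by
    refine ⟨⟨i, Finset.mem_insert_self i sx⟩, {i}, sx, ?_, ?_, ?_, Or.inr hsx⟩
    · ext v; simp
    · simpa using hi
    · simp
  refine ⟨insert i sx, hface, ?_, ?_, ?_⟩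
  · intro v hv
    have hvi : v ≠ i := fun he => hv (he ▸ Finset.mem_insert_self i sx)
    have hvsx : v ∉ sx := fun hh => hv (Finset.mem_insert_of_mem hh)
    rw [coneF, if_neg hvi, hx0 v hvsx, mul_zero, add_zero]
  · rw [Finset.sum_insert hix]
    have hit : coneF i h x.1 i = h := by
      rw [coneF, if_pos rfl, S.X_zero_on_I x hi, mul_zero, add_zero]
    have hrest : ∑ v ∈ sx, coneF i h x.1 v = (1 - h) := by
      have : ∀ v ∈ sx, coneF i h x.1 v = (1 - h) * x.1 v := by
        intro v hv
        have hvi : v ≠ i := fun he => hix (he ▸ hv)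
        rw [coneF, if_neg hvi, zero_add]
      rw [Finset.sum_congr rfl this, ← Finset.mul_sum, hx1, mul_one]
    rw [hit, hrest]; ring
  · intro v
    rw [coneF]
    have : (0:ℝ) ≤ (1 - h) * x.1 v := mul_nonneg (by linarith) (hxpos v)
    by_cases hvi : v = i
    · rw [if_pos hvi]; linarith
    · rw [if_neg hvi]; linarith

/-- `X`-points are in `GR Y`. -/
lemma memY_X (f : V → ℝ)
    (hf : ∃ s ∈ S.X.faces, (∀ v ∉ s, f v = 0) ∧ (∑ v ∈ s, f v = 1) ∧ ∀ v, 0 ≤ f v) :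
    ∃ s ∈ S.Y.faces, (∀ v ∉ s, f v = 0) ∧ (∑ v ∈ s, f v = 1) ∧ ∀ v, 0 ≤ f v := by
  obtain ⟨s, hs, h⟩ := hf
  exact ⟨s, S.hX hs, h⟩

/-- `X`-points are in `GR J`. -/
lemma memJ_X (f : V → ℝ)
    (hf : ∃ s ∈ S.X.faces, (∀ v ∉ s, f v = 0) ∧ (∑ v ∈ s, f v = 1) ∧ ∀ v, 0 ≤ f v) :
    ∃ s ∈ S.J.faces, (∀ v ∉ s, f v = 0) ∧ (∑ v ∈ s, f v = 1) ∧ ∀ v, 0 ≤ f v := by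
  obtain ⟨s, hs, h⟩ := hf
  refine ⟨s, ⟨?_, ∅, s, by simp, by simp, by simp, Or.inr hs⟩, h⟩
  rcases Finset.eq_empty_or_nonempty s with rfl | hne
  · exact absurd hs S.X.not_empty_mem
  · exact hne

lemma memY_single {i : V} (hi : i ∈ S.I) :
    ∃ s ∈ S.Y.faces, (∀ v ∉ s, singleF i v = 0) ∧ (∑ v ∈ s, singleF i v = 1) ∧
      ∀ v, 0 ≤ singleF i v := by
  refine ⟨{i}, S.hI i hi, ?_, ?_, ?_⟩
  · intro v hv
    rw [singleF, if_neg (by simpa using hv)]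
  · simp [singleF]
  · intro v; rw [singleF]; split <;> norm_num

lemma memJ_single {i : V} (hi : i ∈ S.I) :
    ∃ s ∈ S.J.faces, (∀ v ∉ s, singleF i v = 0) ∧ (∑ v ∈ s, singleF i v = 1) ∧
      ∀ v, 0 ≤ singleF i v := by
  refine ⟨{i}, ⟨⟨i, Finset.mem_singleton_self i⟩, {i}, ∅, by simp, by simpa using hi,
    by simp, Or.inl rfl⟩, ?_, ?_, ?_⟩
  · intro v hv
    rw [singleF, if_neg (by simpa using hv)]
  · simp [singleF]
  · intro v; rw [singleF]; split <;> norm_num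

/-- The inclusion of `GR Y` into `GR J`. -/
noncomputable def inclY : C(GR S.Y, GR S.J) := inclGR S.hYsub

@[simp] lemma inclY_val (p : GR S.Y) : (S.inclY p).1 = p.1 := rfl

/-- The normalized part of a `Y`-point with positive `i`-mass is in the link of `i`. -/
lemma nf_memLink (p : GR S.Y) {i : V} (hi : i ∈ S.I) (hpi : 0 < (S.inclY p).1 i)
    (h1 : S.tI (S.inclY p) < 1) :
    ∃ s ∈ (S.Y.link {i}).faces, (∀ v ∉ s, S.nf (S.inclY p) v = 0) ∧
      (∑ v ∈ s, S.nf (S.inclY p) v = 1) ∧ ∀ v, 0 ≤ S.nf (S.inclY p) v := by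
  set P := S.inclY p with hP
  obtain ⟨s, hs, h0, hsum1, hpos⟩ := p.2
  have hPc : ∀ v, P.1 v = p.1 v := fun v => rfl
  have his : i ∈ s := by
    by_contra h
    rw [hPc i, h0 i h] at hpi; exact lt_irrefl _ hpi
  have htI : S.tI P = P.1 i := S.tI_eq P hi hpi
  have hsJ : s ∈ S.J.faces := S.hYsub hs
  -- the erased face
  have hbne : (s.erase i).Nonempty := by
    by_contra h
    rw [Finset.not_nonempty_iff_eq_empty] at h
    have hsi : s = {i} := by
      apply Finset.eq_singleton_iff_unique_mem.mpr
      refine ⟨his, fun v hv => ?_⟩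
      by_contra hvi
      exact absurd (Finset.mem_erase.mpr ⟨hvi, hv⟩) (h ▸ Finset.notMem_empty v)
    rw [hsi] at hsum1
    simp at hsum1
    rw [htI, hPc i, hsum1] at h1
    exact lt_irrefl _ h1
  have hbY : s.erase i ∈ S.Y.faces := S.Y.down_closed hs (Finset.erase_subset i s) hbne
  have hbdisj : Disjoint (s.erase i) ({i} : Finset V) := by
    simp [Finset.disjoint_singleton_right]
  have hbunion : s.erase i ∪ {i} ∈ S.Y.faces := by
    have : s.erase i ∪ {i} = s := by
      rw [Finset.union_comm]
      have : ({i} : Finset V) ∪ s.erase i = insert i (s.erase i) := by ext v; simp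
      rw [this, Finset.insert_erase his]
    rw [this]; exact hs
  have hbI : ∀ v ∈ s.erase i, v ∉ S.I := by
    intro v hv hvI
    obtain ⟨hvi, hvs⟩ := Finset.mem_erase.mp hv
    exact hvi (S.faceI hsJ hvs hvI his hi)
  refine ⟨s.erase i, ⟨hbY, hbdisj, hbunion⟩, ?_, ?_, ?_⟩
  · intro v hv
    rw [nf]
    by_cases hvI : v ∈ S.I
    · rw [if_pos hvI]
    · rw [if_neg hvI]
      have hvs : v ∉ s := by
        intro hvs
        by_cases hvi : v = i
        · exact hvI (hvi ▸ hi)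
        · exact hv (Finset.mem_erase.mpr ⟨hvi, hvs⟩)
      rw [hPc v, h0 v hvs, zero_div]
  · have heq : ∀ v ∈ s.erase i, S.nf P v = P.1 v / (1 - S.tI P) := by
      intro v hv; rw [nf, if_neg (hbI v hv)]
    rw [Finset.sum_congr rfl heq, ← Finset.sum_div]
    have hsplit : ∑ v ∈ s.erase i, P.1 v = 1 - P.1 i := by
      have := Finset.add_sum_erase s (fun v => P.1 v) his
      have hsum1' : ∑ v ∈ s, P.1 v = 1 := hsum1
      linarith
    rw [hsplit, ← htI, div_self]
    intro hcontra
    have : S.tI P = 1 := by linarith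
    rw [this] at h1; exact lt_irrefl _ h1
  · intro v
    rw [nf]
    by_cases hvI : v ∈ S.I
    · rw [if_pos hvI]
    · rw [if_neg hvI]
      exact div_nonneg (coord_nonneg P v) (by linarith)

end S7Data


namespace S7Data

variable {V : Type} (S : S7Data V)

/-! ### The homotopy `A` : from `j ∘ r` to the identity of `GR J`. -/

noncomputable def hA (t u : ℝ) : ℝ := (1 - cl u) * max (2*t-1) 0 + cl u * t

noncomputable def sA (t u : ℝ) : ℝ := (1 - cl u) * (3 - 8*t) + cl u

lemma hA_nonneg {t : ℝ} (ht : 0 ≤ t) (u : ℝ) : 0 ≤ hA t u := by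
  have h1 := cl_nonneg u; have h2 := cl_le_one u
  have h3 : (0:ℝ) ≤ max (2*t-1) 0 := le_max_right _ _
  have : 0 ≤ (1 - cl u) * max (2*t-1) 0 := mul_nonneg (by linarith) h3
  have : 0 ≤ cl u * t := mul_nonneg h1 ht
  unfold hA; nlinarith [mul_nonneg (sub_nonneg.mpr h2) h3]

lemma hA_le_one {t : ℝ} (ht : t ≤ 1) (u : ℝ) : hA t u ≤ 1 := by
  have h1 := cl_nonneg u; have h2 := cl_le_one u
  have h3 : max (2*t-1) 0 ≤ 1 := max_le (by linarith) (by norm_num)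
  unfold hA
  nlinarith [mul_le_mul_of_nonneg_left h3 (sub_nonneg.mpr h2)]

lemma hA_one (u : ℝ) : hA 1 u = 1 := by
  unfold hA
  rw [show (2:ℝ)*1-1 = 1 by norm_num, max_eq_left (by norm_num : (0:ℝ) ≤ 1)]
  ring

/-- The main cone formula for `A`. -/
noncomputable def mainA (i : V) (hi : i ∈ S.I) (t u : ℝ) (x : GR S.X) : V → ℝ :=
  coneF i (hA t u) ((S.GEv i hi (sA t u) x).1)

lemma mainA_congr {i j : V} (e : i = j) (hi : i ∈ S.I) (t u : ℝ) (x : GR S.X) :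
    S.mainA i hi t u x = S.mainA j (e ▸ hi) t u x := by subst e; rfl

noncomputable def Afn (u : ℝ) (p : GR S.J) : V → ℝ :=
  if h : ∃ i ∈ S.I, 0 < p.1 i then
    if h1 : S.tI p < 1 then
      S.mainA h.choose h.choose_spec.1 (p.1 h.choose) u ⟨S.nf p, S.nf_memX p h1⟩
    else singleF h.choose
  else p.1

lemma Afn_eq_of (u : ℝ) (p : GR S.J) {i₀ : V} (hi₀ : i₀ ∈ S.I) (hp : 0 < p.1 i₀)
    (h1 : S.tI p < 1) :
    S.Afn u p = S.mainA i₀ hi₀ (p.1 i₀) u ⟨S.nf p, S.nf_memX p h1⟩ := by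
  have h : ∃ i ∈ S.I, 0 < p.1 i := ⟨i₀, hi₀, hp⟩
  have he : h.choose = i₀ := S.uniqI p h.choose_spec.1 hi₀ h.choose_spec.2 hp
  rw [Afn, dif_pos h, dif_pos h1, S.mainA_congr he h.choose_spec.1 (p.1 h.choose) u]
  simp only [he]

lemma Afn_eq_single (u : ℝ) (p : GR S.J) {i₀ : V} (hi₀ : i₀ ∈ S.I) (hp : 0 < p.1 i₀)
    (h1 : ¬ S.tI p < 1) : S.Afn u p = singleF i₀ := by
  have h : ∃ i ∈ S.I, 0 < p.1 i := ⟨i₀, hi₀, hp⟩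
  have he : h.choose = i₀ := S.uniqI p h.choose_spec.1 hi₀ h.choose_spec.2 hp
  rw [Afn, dif_pos h, dif_neg h1, he]

lemma tI_eq_one_of_not_lt (p : GR S.J) (h1 : ¬ S.tI p < 1) : S.tI p = 1 :=
  le_antisymm (S.tI_le_one p) (not_lt.mp h1)

/-- At an apex, all other coordinates vanish. -/
lemma coords_of_apex (p : GR S.J) {i : V} (hpi : p.1 i = 1) {v : V} (hv : v ≠ i) :
    p.1 v = 0 := by
  obtain ⟨s, hs, h0, h1, hpos⟩ := p.2
  have his : i ∈ s := by
    by_contra h; rw [h0 i h] at hpi; norm_num at hpi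
  by_cases hvs : v ∈ s
  · have hsplit : p.1 i + ∑ x ∈ s.erase i, p.1 x = ∑ x ∈ s, p.1 x :=
      Finset.add_sum_erase s (fun w => p.1 w) his
    have hv' : v ∈ s.erase i := Finset.mem_erase.mpr ⟨hv, hvs⟩
    have hle : p.1 v ≤ ∑ w ∈ s.erase i, p.1 w :=
      Finset.single_le_sum (fun w _ => hpos w) hv'
    have h1' : ∑ w ∈ s, p.1 w = 1 := h1
    have : ∑ w ∈ s.erase i, p.1 w = 0 := by
      rw [hpi] at hsplit; linarith
    linarith [hpos v]
  · exact h0 v hvs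

lemma Afn_one (p : GR S.J) : S.Afn 1 p = p.1 := by
  by_cases h : ∃ i ∈ S.I, 0 < p.1 i
  · obtain ⟨i, hi, hp⟩ := h
    by_cases h1 : S.tI p < 1
    · rw [S.Afn_eq_of 1 p hi hp h1]
      have ht : S.tI p = p.1 i := S.tI_eq p hi hp
      funext v
      rw [mainA, hA, sA, cl_one]
      have hGE : S.GEv i hi ((1-1) * (3 - 8*(p.1 i)) + 1) ⟨S.nf p, S.nf_memX p h1⟩
          = ⟨S.nf p, S.nf_memX p h1⟩ := S.GEv_one_le i hi (by norm_num) _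
      rw [show (1-1) * max (2*(p.1 i)-1) 0 + 1 * (p.1 i) = p.1 i by ring, hGE]
      rw [coneF]
      by_cases hvi : v = i
      · subst hvi
        rw [if_pos rfl]
        show p.1 v + (1 - p.1 v) * S.nf p v = p.1 v
        have : S.nf p v = 0 := by simp only [nf, if_pos hi]
        rw [this]; ring
      · rw [if_neg hvi, zero_add]
        show (1 - p.1 i) * S.nf p v = p.1 v
        by_cases hvI : v ∈ S.I
        · have h0 : S.nf p v = 0 := by simp only [nf, if_pos hvI]
          have h0' : p.1 v = 0 := S.coordI_eq_zero p hi hp hvI hvi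
          rw [h0, h0', mul_zero]
        · simp only [nf, if_neg hvI, ht]
          have hne : 1 - p.1 i ≠ 0 := by
            rw [← ht]; intro hc; rw [sub_eq_zero] at hc; rw [← hc] at h1; exact lt_irrefl _ h1
          field_simp
    · rw [S.Afn_eq_single 1 p hi hp h1]
      have ht1 : S.tI p = 1 := S.tI_eq_one_of_not_lt p h1
      have hpi1 : p.1 i = 1 := by rw [← S.tI_eq p hi hp]; exact ht1
      funext v
      rw [singleF]
      by_cases hvi : v = i
      · rw [if_pos hvi, hvi, hpi1]
      · rw [if_neg hvi, S.coords_of_apex p hpi1 hvi]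
  · rw [Afn, dif_neg h]

lemma Afn_memJ (u : ℝ) (p : GR S.J) :
    ∃ s ∈ S.J.faces, (∀ v ∉ s, S.Afn u p v = 0) ∧ (∑ v ∈ s, S.Afn u p v = 1) ∧
      ∀ v, 0 ≤ S.Afn u p v := by
  by_cases h : ∃ i ∈ S.I, 0 < p.1 i
  · obtain ⟨i, hi, hp⟩ := h
    by_cases h1 : S.tI p < 1
    · rw [S.Afn_eq_of u p hi hp h1]
      have ht0 : 0 ≤ p.1 i := coord_nonneg p i
      have ht1 : p.1 i ≤ 1 := coord_le_one p i
      exact S.memJ_cone hi (hA_nonneg ht0 u) (hA_le_one ht1 u) _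
    · rw [S.Afn_eq_single u p hi hp h1]
      exact S.memJ_single hi
  · rw [Afn, dif_neg h]; exact p.2

/-- `X`-membership for points with no `I`-mass. -/
lemma mem_X_of_noI (p : GR S.J) (h : ¬ ∃ i ∈ S.I, 0 < p.1 i) :
    ∃ s ∈ S.X.faces, (∀ v ∉ s, p.1 v = 0) ∧ (∑ v ∈ s, p.1 v = 1) ∧ ∀ v, 0 ≤ p.1 v := by
  push_neg at h
  obtain ⟨b, hbI, hb0, hbsum, hbX⟩ := S.decomp p
  have htI : S.tI p = 0 := by
    rw [tI, dif_neg]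
    push_neg
    exact fun i hi => h i hi
  rw [htI] at hbsum
  have hbne : b.Nonempty := by
    rcases Finset.eq_empty_or_nonempty b with rfl | hne
    · simp at hbsum
    · exact hne
  refine ⟨b, hbX hbne, ?_, by rw [hbsum]; norm_num, fun v => coord_nonneg p v⟩
  intro v hv
  by_cases hvI : v ∈ S.I
  · exact le_antisymm (h v hvI) (coord_nonneg p v)
  · exact hb0 v hvI hv

lemma Afn_memY0 (p : GR S.J) :
    ∃ s ∈ S.Y.faces, (∀ v ∉ s, S.Afn 0 p v = 0) ∧ (∑ v ∈ s, S.Afn 0 p v = 1) ∧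
      ∀ v, 0 ≤ S.Afn 0 p v := by
  by_cases h : ∃ i ∈ S.I, 0 < p.1 i
  · obtain ⟨i, hi, hp⟩ := h
    by_cases h1 : S.tI p < 1
    · rw [S.Afn_eq_of 0 p hi hp h1]
      set t := p.1 i with htdef
      by_cases ht : t ≤ 1/2
      · have hhA : hA t 0 = 0 := by
          rw [hA, cl_zero, max_eq_right (by linarith)]; ring
        have : S.mainA i hi t 0 ⟨S.nf p, S.nf_memX p h1⟩
            = (S.GEv i hi (sA t 0) ⟨S.nf p, S.nf_memX p h1⟩).1 := by
          funext v
          rw [mainA, coneF, hhA]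
          split <;> ring
        rw [this]
        exact S.memY_X _ (S.GEv i hi (sA t 0) ⟨S.nf p, S.nf_memX p h1⟩).2
      · push_neg at ht
        have hsA : sA t 0 ≤ 0 := by rw [sA, cl_zero]; nlinarith
        have hGE := S.GEv_nonpos i hi hsA ⟨S.nf p, S.nf_memX p h1⟩
        have : S.mainA i hi t 0 ⟨S.nf p, S.nf_memX p h1⟩
            = coneF i (hA t 0) ((S.gm i hi ⟨S.nf p, S.nf_memX p h1⟩).1) := by
          rw [mainA, hGE]; rfl
        rw [this]
        exact S.memY_cone hi (hA_nonneg (coord_nonneg p i) 0)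
          (hA_le_one (coord_le_one p i) 0) _
    · rw [S.Afn_eq_single 0 p hi hp h1]
      exact S.memY_single hi
  · rw [Afn, dif_neg h]
    exact S.memY_X _ (S.mem_X_of_noI p h)

end S7Data


/-- Continuity from continuity on an open region. -/
lemma contAt_of_region {α β : Type*} [TopologicalSpace α] [TopologicalSpace β] {f : α → β}
    {U : Set α} (hU : IsOpen U) (hf : Continuous fun x : ↥U => f x.1) {x : α} (hx : x ∈ U) :
    ContinuousAt f x :=
  (continuousOn_iff_continuous_restrict.mpr hf).continuousAt (hU.mem_nhds hx)

namespace S7Data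

variable {V : Type} (S : S7Data V)

lemma cl2_cont : Continuous fun w : ℝ × ℝ => cl w.2 := cl_cont.comp continuous_snd

lemma hA_cont : Continuous fun w : ℝ × ℝ => hA w.1 w.2 := by
  apply Continuous.add
  · exact (continuous_const.sub cl2_cont).mul
      (((continuous_const.mul continuous_fst).sub continuous_const).max continuous_const)
  · exact cl2_cont.mul continuous_fst

lemma sA_cont : Continuous fun w : ℝ × ℝ => sA w.1 w.2 := by
  apply Continuous.add
  · exact (continuous_const.sub cl2_cont).mul
      (continuous_const.sub (continuous_const.mul continuous_fst))
  · exact cl2_cont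

lemma contAt_main {i₀ : V} (hi₀ : i₀ ∈ S.I) {z₀ : ℝ × GR S.J} (hp : 0 < z₀.2.1 i₀)
    (h1 : S.tI z₀.2 < 1) : ContinuousAt (fun z : ℝ × GR S.J => S.Afn z.1 z.2) z₀ := by
  set U : Set (ℝ × GR S.J) := {z | 0 < z.2.1 i₀} ∩ {z | S.tI z.2 < 1} with hUdef
  have hU : IsOpen U := by
    apply IsOpen.inter
    · exact isOpen_lt continuous_const
        ((continuous_apply i₀).comp (continuous_subtype_val.comp continuous_snd))
    · exact isOpen_lt (S.tI_cont.comp continuous_snd) continuous_const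
  refine contAt_of_region hU ?_ (Set.mem_inter hp h1)
  have heq : (fun z : ↥U => S.Afn z.1.1 z.1.2)
      = fun z : ↥U => S.mainA i₀ hi₀ (z.1.2.1 i₀) z.1.1 ⟨S.nf z.1.2, S.nf_memX _ z.2.2⟩ :=
    funext fun z => S.Afn_eq_of z.1.1 z.1.2 hi₀ z.2.1 z.2.2
  rw [heq]
  have hsub : Continuous fun z : ↥U => z.1.2 :=
    continuous_snd.comp continuous_subtype_val
  have hval : Continuous fun z : ↥U => z.1.2.1 :=
    continuous_subtype_val.comp hsub
  have hnf : Continuous fun z : ↥U => S.nf z.1.2 := by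
    apply continuous_pi; intro v
    by_cases hv : v ∈ S.I
    · simp only [nf, if_pos hv]; exact continuous_const
    · simp only [nf, if_neg hv]
      apply Continuous.div
      · exact (continuous_apply v).comp hval
      · exact continuous_const.sub (S.tI_cont.comp hsub)
      · intro z
        have := z.2.2
        intro hc
        have : S.tI z.1.2 = 1 := by linarith [sub_eq_zero.mp hc]
        exact absurd this (ne_of_lt z.2.2)
  have hx : Continuous fun z : ↥U => (⟨S.nf z.1.2, S.nf_memX _ z.2.2⟩ : GR S.X) :=
    hnf.subtype_mk _
  have ht : Continuous fun z : ↥U => z.1.2.1 i₀ := (continuous_apply i₀).comp hval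
  have hu : Continuous fun z : ↥U => z.1.1 := continuous_fst.comp continuous_subtype_val
  have htu : Continuous fun z : ↥U => ((z.1.2.1 i₀, z.1.1) : ℝ × ℝ) := ht.prodMk hu
  have hsAc : Continuous fun z : ↥U => sA (z.1.2.1 i₀) z.1.1 := sA_cont.comp htu
  have hhAc : Continuous fun z : ↥U => hA (z.1.2.1 i₀) z.1.1 := hA_cont.comp htu
  have hGEc : Continuous fun z : ↥U =>
      (S.GEv i₀ hi₀ (sA (z.1.2.1 i₀) z.1.1) (⟨S.nf z.1.2, S.nf_memX _ z.2.2⟩ : GR S.X)).1 :=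
    continuous_subtype_val.comp ((S.GEv_cont i₀ hi₀).comp (hsAc.prodMk hx))
  apply continuous_pi; intro v
  simp only [mainA, coneF]
  apply Continuous.add
  · by_cases hvi : v = i₀
    · simp only [if_pos hvi]; exact hhAc
    · simp only [if_neg hvi]; exact continuous_const
  · exact (continuous_const.sub hhAc).mul ((continuous_apply v).comp hGEc)

lemma Afn_coord_apexI {i₀ : V} (hi₀ : i₀ ∈ S.I) (u : ℝ) (p : GR S.J) (hp : 0 < p.1 i₀) :
    S.Afn u p i₀ = hA (p.1 i₀) u := by
  by_cases h1 : S.tI p < 1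
  · rw [S.Afn_eq_of u p hi₀ hp h1]
    show (if i₀ = i₀ then hA (p.1 i₀) u else 0)
      + (1 - hA (p.1 i₀) u) * (S.GEv i₀ hi₀ (sA (p.1 i₀) u) _).1 i₀ = _
    rw [if_pos rfl, S.X_zero_on_I _ hi₀, mul_zero, add_zero]
  · rw [S.Afn_eq_single u p hi₀ hp h1]
    have ht1 : S.tI p = 1 := S.tI_eq_one_of_not_lt p h1
    have hpi1 : p.1 i₀ = 1 := by rw [← S.tI_eq p hi₀ hp]; exact ht1
    rw [singleF, if_pos rfl, hpi1, hA_one]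

lemma Afn_nonneg (u : ℝ) (p : GR S.J) (v : V) : 0 ≤ S.Afn u p v := by
  rw [Afn]
  split
  · next h =>
    split
    · next h1 =>
      show (0:ℝ) ≤ (if v = h.choose then hA (p.1 h.choose) u else 0)
        + (1 - hA (p.1 h.choose) u) * _
      have hb1 : hA (p.1 h.choose) u ≤ 1 := hA_le_one (coord_le_one p _) u
      have hb0 : 0 ≤ hA (p.1 h.choose) u := hA_nonneg (coord_nonneg p _) u
      have hge : (0:ℝ) ≤ (S.GEv h.choose h.choose_spec.1 (sA (p.1 h.choose) u)
          ⟨S.nf p, S.nf_memX p h1⟩).1 v := coord_nonneg _ v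
      have : (0:ℝ) ≤ (1 - hA (p.1 h.choose) u) * (S.GEv h.choose h.choose_spec.1
          (sA (p.1 h.choose) u) ⟨S.nf p, S.nf_memX p h1⟩).1 v :=
        mul_nonneg (by linarith) hge
      split <;> linarith
    · rw [singleF]; split <;> norm_num
  · exact coord_nonneg p v

lemma Afn_le_bound {i₀ : V} (hi₀ : i₀ ∈ S.I) (u : ℝ) (p : GR S.J) (hp : 0 < p.1 i₀)
    {v : V} (hv : v ≠ i₀) : S.Afn u p v ≤ 1 - hA (p.1 i₀) u := by
  by_cases h1 : S.tI p < 1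
  · rw [S.Afn_eq_of u p hi₀ hp h1]
    show (if v = i₀ then hA (p.1 i₀) u else 0)
      + (1 - hA (p.1 i₀) u) * (S.GEv i₀ hi₀ (sA (p.1 i₀) u) _).1 v ≤ _
    rw [if_neg hv, zero_add]
    have hb1 : hA (p.1 i₀) u ≤ 1 := hA_le_one (coord_le_one p _) u
    have hle : (S.GEv i₀ hi₀ (sA (p.1 i₀) u) ⟨S.nf p, S.nf_memX p h1⟩).1 v ≤ 1 :=
      coord_le_one _ v
    have hge : (0:ℝ) ≤ (S.GEv i₀ hi₀ (sA (p.1 i₀) u) ⟨S.nf p, S.nf_memX p h1⟩).1 v :=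
      coord_nonneg _ v
    nlinarith
  · rw [S.Afn_eq_single u p hi₀ hp h1]
    have ht1 : S.tI p = 1 := S.tI_eq_one_of_not_lt p h1
    have hpi1 : p.1 i₀ = 1 := by rw [← S.tI_eq p hi₀ hp]; exact ht1
    rw [singleF, if_neg hv, hpi1, hA_one]; norm_num

lemma contAt_apex {i₀ : V} (hi₀ : i₀ ∈ S.I) {z₀ : ℝ × GR S.J} (hp1 : z₀.2.1 i₀ = 1) :
    ContinuousAt (fun z : ℝ × GR S.J => S.Afn z.1 z.2) z₀ := by
  have hU : IsOpen {z : ℝ × GR S.J | 1/2 < z.2.1 i₀} :=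
    isOpen_lt continuous_const
      ((continuous_apply i₀).comp (continuous_subtype_val.comp continuous_snd))
  have hz₀U : z₀ ∈ {z : ℝ × GR S.J | 1/2 < z.2.1 i₀} := by
    show (1:ℝ)/2 < z₀.2.1 i₀; rw [hp1]; norm_num
  have hmem : {z : ℝ × GR S.J | 1/2 < z.2.1 i₀} ∈ nhds z₀ := hU.mem_nhds hz₀U
  have htI1 : ¬ S.tI z₀.2 < 1 := by
    have h1 : z₀.2.1 i₀ ≤ S.tI z₀.2 := S.coord_le_tI z₀.2 hi₀
    rw [hp1] at h1
    intro hc; linarith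
  have hAz : S.Afn z₀.1 z₀.2 = singleF i₀ :=
    S.Afn_eq_single z₀.1 z₀.2 hi₀ (by rw [hp1]; norm_num) htI1
  have hpair : Continuous fun z : ℝ × GR S.J => ((z.2.1 i₀, z.1) : ℝ × ℝ) :=
    ((continuous_apply i₀).comp (continuous_subtype_val.comp continuous_snd)).prodMk
      continuous_fst
  have hhAcomp : Continuous fun z : ℝ × GR S.J => hA (z.2.1 i₀) z.1 := hA_cont.comp hpair
  apply continuousAt_pi.mpr
  intro v
  by_cases hvi : v = i₀
  · subst hvi
    have heq : (fun z : ℝ × GR S.J => S.Afn z.1 z.2 v) =ᶠ[nhds z₀]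
        fun z => hA (z.2.1 v) z.1 := by
      filter_upwards [hmem] with z hz
      have hz' : (1:ℝ)/2 < z.2.1 v := hz
      exact S.Afn_coord_apexI hi₀ z.1 z.2 (by linarith)
    exact (hhAcomp.continuousAt).congr heq.symm
  · have hval0 : S.Afn z₀.1 z₀.2 v = 0 := by rw [hAz, singleF, if_neg hvi]
    show ContinuousAt (fun z : ℝ × GR S.J => S.Afn z.1 z.2 v) z₀
    rw [ContinuousAt, hval0]
    have hupper : ∀ᶠ z : ℝ × GR S.J in nhds z₀, S.Afn z.1 z.2 v ≤ 1 - hA (z.2.1 i₀) z.1 := by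
      filter_upwards [hmem] with z hz
      have hz' : (1:ℝ)/2 < z.2.1 i₀ := hz
      exact S.Afn_le_bound hi₀ z.1 z.2 (by linarith) hvi
    have hlower : ∀ᶠ z : ℝ × GR S.J in nhds z₀, (0:ℝ) ≤ S.Afn z.1 z.2 v :=
      Filter.Eventually.of_forall fun z => S.Afn_nonneg z.1 z.2 v
    have huplim : Filter.Tendsto (fun z : ℝ × GR S.J => 1 - hA (z.2.1 i₀) z.1) (nhds z₀)
        (nhds 0) := by
      have h00 : (1:ℝ) - hA (z₀.2.1 i₀) z₀.1 = 0 := by rw [hp1, hA_one]; ring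
      have hc1 : Continuous fun z : ℝ × GR S.J => (1:ℝ) - hA (z.2.1 i₀) z.1 :=
        continuous_const.sub hhAcomp
      have htd := hc1.tendsto z₀
      rw [h00] at htd
      exact htd
    exact tendsto_of_tendsto_of_tendsto_of_le_of_le' tendsto_const_nhds huplim hlower hupper

lemma Afn_eq_lowt (u : ℝ) (p : GR S.J) (hlow : S.tI p < 1/8) :
    S.Afn u p = fun v => if v ∈ S.I then cl u * p.1 v
      else (1 - cl u * S.tI p) * p.1 v / (1 - S.tI p) := by
  by_cases h : ∃ i ∈ S.I, 0 < p.1 i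
  · obtain ⟨i, hi, hp⟩ := h
    have htI : S.tI p = p.1 i := S.tI_eq p hi hp
    have h1 : S.tI p < 1 := by linarith
    rw [S.Afn_eq_of u p hi hp h1]
    have ht8 : p.1 i < 1/8 := by rw [← htI]; exact hlow
    have hhA : hA (p.1 i) u = cl u * p.1 i := by
      rw [hA, max_eq_right (by linarith)]; ring
    have hsA1 : (1:ℝ) ≤ sA (p.1 i) u := by
      rw [sA]
      have h1c := cl_nonneg u; have h2c := cl_le_one u
      nlinarith
    have hGE := S.GEv_one_le i hi hsA1 ⟨S.nf p, S.nf_memX p h1⟩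
    funext v
    show (if v = i then hA (p.1 i) u else 0)
      + (1 - hA (p.1 i) u) * (S.GEv i hi (sA (p.1 i) u) ⟨S.nf p, S.nf_memX p h1⟩).1 v = _
    rw [hGE]
    show (if v = i then hA (p.1 i) u else 0) + (1 - hA (p.1 i) u) * S.nf p v = _
    by_cases hvi : v = i
    · subst hvi
      rw [if_pos rfl, if_pos hi]
      have : S.nf p v = 0 := by simp only [nf, if_pos hi]
      rw [this, hhA]; ring
    · rw [if_neg hvi, zero_add]
      by_cases hvI : v ∈ S.I
      · rw [if_pos hvI]
        have h0 : S.nf p v = 0 := by simp only [nf, if_pos hvI]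
        have h0' : p.1 v = 0 := S.coordI_eq_zero p hi hp hvI hvi
        rw [h0, h0', mul_zero, mul_zero]
      · rw [if_neg hvI]
        simp only [nf, if_neg hvI]
        rw [hhA, ← htI]
        ring
  · rw [Afn, dif_neg h]
    have htI : S.tI p = 0 := by
      rw [tI, dif_neg h]
    push_neg at h
    funext v
    by_cases hvI : v ∈ S.I
    · rw [if_pos hvI]
      have : p.1 v = 0 := le_antisymm (h v hvI) (coord_nonneg p v)
      rw [this, mul_zero]
    · rw [if_neg hvI, htI]
      ring

lemma contAt_lowt {z₀ : ℝ × GR S.J} (h0 : S.tI z₀.2 = 0) :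
    ContinuousAt (fun z : ℝ × GR S.J => S.Afn z.1 z.2) z₀ := by
  set U : Set (ℝ × GR S.J) := {z | S.tI z.2 < 1/8} with hUdef
  have hU : IsOpen U := isOpen_lt (S.tI_cont.comp continuous_snd) continuous_const
  refine contAt_of_region hU ?_ (by show S.tI z₀.2 < 1/8; rw [h0]; norm_num)
  have heq : (fun z : ↥U => S.Afn z.1.1 z.1.2)
      = fun z : ↥U => fun v => if v ∈ S.I then cl z.1.1 * z.1.2.1 v
        else (1 - cl z.1.1 * S.tI z.1.2) * z.1.2.1 v / (1 - S.tI z.1.2) :=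
    funext fun z => S.Afn_eq_lowt z.1.1 z.1.2 z.2
  rw [heq]
  have hsub : Continuous fun z : ↥U => z.1.2 := continuous_snd.comp continuous_subtype_val
  have hval : Continuous fun z : ↥U => z.1.2.1 := continuous_subtype_val.comp hsub
  have hu : Continuous fun z : ↥U => cl z.1.1 :=
    cl_cont.comp (continuous_fst.comp continuous_subtype_val)
  have htIc : Continuous fun z : ↥U => S.tI z.1.2 := S.tI_cont.comp hsub
  apply continuous_pi; intro v
  by_cases hvI : v ∈ S.I
  · simp only [if_pos hvI]
    exact hu.mul ((continuous_apply v).comp hval)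
  · simp only [if_neg hvI]
    apply Continuous.div
    · exact (continuous_const.sub (hu.mul htIc)).mul ((continuous_apply v).comp hval)
    · exact continuous_const.sub htIc
    · intro z
      have := z.2
      have hlt : S.tI z.1.2 < 1/8 := this
      intro hc
      have : S.tI z.1.2 = 1 := by linarith [sub_eq_zero.mp hc]
      linarith

lemma Afn_cont : Continuous fun z : ℝ × GR S.J => S.Afn z.1 z.2 := by
  rw [continuous_iff_continuousAt]
  intro z₀
  by_cases h : ∃ i ∈ S.I, 0 < z₀.2.1 i
  · obtain ⟨i, hi, hp⟩ := h
    by_cases h1 : S.tI z₀.2 < 1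
    · exact S.contAt_main hi hp h1
    · have ht1 : S.tI z₀.2 = 1 := S.tI_eq_one_of_not_lt z₀.2 h1
      have : z₀.2.1 i = 1 := by rw [← S.tI_eq z₀.2 hi hp]; exact ht1
      exact S.contAt_apex hi this
  · have : S.tI z₀.2 = 0 := by rw [tI, dif_neg h]
    exact S.contAt_lowt this

/-- The retraction-like map `r : GR J → GR Y`. -/
noncomputable def rC : C(GR S.J, GR S.Y) where
  toFun p := ⟨S.Afn 0 p, S.Afn_memY0 p⟩
  continuous_toFun := by
    apply Continuous.subtype_mk
    exact S.Afn_cont.comp (continuous_const.prodMk continuous_id)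

/-- The homotopy `A` from `j ∘ r` to the identity. -/
noncomputable def HomA : ContinuousMap.Homotopy ((inclGR S.hYsub).comp S.rC)
    (ContinuousMap.id (GR S.J)) where
  toFun z := ⟨S.Afn z.1.1 z.2, S.Afn_memJ z.1.1 z.2⟩
  continuous_toFun := by
    apply Continuous.subtype_mk
    exact S.Afn_cont.comp ((continuous_subtype_val.comp continuous_fst).prodMk continuous_snd)
  map_zero_left p := by
    apply Subtype.ext
    show S.Afn ((0 : unitInterval) : ℝ) p = _
    rfl
  map_one_left p := by
    apply Subtype.ext
    show S.Afn ((1 : unitInterval) : ℝ) p = p.1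
    exact S.Afn_one p

end S7Data


namespace S7Data

variable {V : Type} (S : S7Data V)

section Bands

variable (i : V) (hi : i ∈ S.I)

/-- Inclusion of the link realization into `GR X`. -/
noncomputable def inL : GR (S.Y.link {i}) → GR S.X := fun w => inclGR (S.hsub i hi) w

lemma inL_cont : Continuous (S.inL i hi) := (inclGR (S.hsub i hi)).continuous

@[simp] lemma inL_val (w : GR (S.Y.link {i})) : (S.inL i hi w).1 = w.1 := rfl

/-- The `F`-square family `G_a (ι (K_b w))`. -/
noncomputable def FF (a b : ℝ) (w : GR (S.Y.link {i})) : GR S.X :=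
  S.GEv i hi a (S.inL i hi (S.KEv i hi b w))

/-- The `Ξ`-square family `G_a (G_b (ι w))`. -/
noncomputable def XF (a b : ℝ) (w : GR (S.Y.link {i})) : GR S.X :=
  S.GEv i hi a (S.GEv i hi b (S.inL i hi w))

lemma FF_cont : Continuous fun z : (ℝ × ℝ) × GR (S.Y.link {i}) =>
    S.FF i hi z.1.1 z.1.2 z.2 := by
  have hK : Continuous fun z : (ℝ × ℝ) × GR (S.Y.link {i}) => S.KEv i hi z.1.2 z.2 :=
    (S.KEv_cont i hi).comp ((continuous_snd.comp continuous_fst).prodMk continuous_snd)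
  exact (S.GEv_cont i hi).comp ((continuous_fst.comp continuous_fst).prodMk
    ((S.inL_cont i hi).comp hK))

lemma XF_cont : Continuous fun z : (ℝ × ℝ) × GR (S.Y.link {i}) =>
    S.XF i hi z.1.1 z.1.2 z.2 := by
  have hInner : Continuous fun z : (ℝ × ℝ) × GR (S.Y.link {i}) =>
      S.GEv i hi z.1.2 (S.inL i hi z.2) :=
    (S.GEv_cont i hi).comp ((continuous_snd.comp continuous_fst).prodMk
      ((S.inL_cont i hi).comp continuous_snd))
  exact (S.GEv_cont i hi).comp ((continuous_fst.comp continuous_fst).prodMk hInner)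

lemma FF_a1 (a : ℝ) (w : GR (S.Y.link {i})) :
    S.FF i hi a 1 w = S.GEv i hi a (S.inL i hi w) := by
  rw [FF, S.KEv_one_le i hi le_rfl]

lemma XF_a1 (a : ℝ) (w : GR (S.Y.link {i})) :
    S.XF i hi a 1 w = S.GEv i hi a (S.inL i hi w) := by
  rw [XF, S.GEv_one_le i hi le_rfl]

lemma FF_a0 (a : ℝ) (w : GR (S.Y.link {i})) :
    S.FF i hi a 0 w = S.GEv i hi a (S.inL i hi (S.gm i hi (S.inL i hi w))) := by
  rw [FF, S.KEv_nonpos i hi le_rfl]; rfl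

lemma XF_a0 (a : ℝ) (w : GR (S.Y.link {i})) :
    S.XF i hi a 0 w = S.GEv i hi a (S.inL i hi (S.gm i hi (S.inL i hi w))) := by
  rw [XF, S.GEv_nonpos i hi le_rfl]; rfl

lemma FF_eq_XF_0 (a : ℝ) (w : GR (S.Y.link {i})) : S.FF i hi a 0 w = S.XF i hi a 0 w := by
  rw [FF_a0, XF_a0]

lemma FF_eq_XF_1 (a : ℝ) (w : GR (S.Y.link {i})) : S.FF i hi a 1 w = S.XF i hi a 1 w := by
  rw [FF_a1, XF_a1]

lemma FF_1b (b : ℝ) (w : GR (S.Y.link {i})) :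
    S.FF i hi 1 b w = S.inL i hi (S.KEv i hi b w) := by
  rw [FF, S.GEv_one_le i hi le_rfl]

lemma XF_1b (b : ℝ) (w : GR (S.Y.link {i})) :
    S.XF i hi 1 b w = S.GEv i hi b (S.inL i hi w) := by
  rw [XF, S.GEv_one_le i hi le_rfl]

lemma FF_01_eq_FF_10 (w : GR (S.Y.link {i})) : S.FF i hi 0 1 w = S.FF i hi 1 0 w := by
  rw [FF_a1, FF_1b, S.GEv_nonpos i hi le_rfl, S.KEv_nonpos i hi le_rfl]; rfl

/-! The six bands of the coherence square. -/

noncomputable def band1 (l σ : ℝ) (w : GR (S.Y.link {i})) : GR S.X :=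
  if σ ≤ 1/6 then S.FF i hi 0 (1-6*cl σ) w
  else if σ ≤ 1/3 then S.XF i hi 0 (6*cl σ-1) w
  else if σ ≤ 2/3 then S.FF i hi (l * cl (min (6*cl σ-2) (4-6*cl σ))) 1 w
  else if σ ≤ 5/6 then S.FF i hi 1 (6*cl σ-4) w
  else S.FF i hi 1 1 w

noncomputable def band2 (l σ : ℝ) (w : GR (S.Y.link {i})) : GR S.X :=
  if σ ≤ 1/6 then S.FF i hi 0 (1-6*cl σ) w
  else if σ ≤ 1/2 then
    S.XF i hi
      ((1-l) * (if σ ≤ 1/3 then 0 else 6*cl σ-2) + l * (if σ ≤ 1/3 then 6*cl σ-1 else 1))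
      ((1-l) * (if σ ≤ 1/3 then 6*cl σ-1 else 1) + l * (if σ ≤ 1/3 then 0 else 6*cl σ-2)) w
  else if σ ≤ 2/3 then S.FF i hi (cl (4-6*cl σ)) 1 w
  else if σ ≤ 5/6 then S.FF i hi 1 (6*cl σ-4) w
  else S.FF i hi 1 1 w

noncomputable def band3 (l σ : ℝ) (w : GR (S.Y.link {i})) : GR S.X :=
  if σ ≤ 1/6 then S.FF i hi 0 (1-6*cl σ) w
  else if σ ≤ 1/3 then S.FF i hi (6*cl σ-1) 0 w
  else if σ ≤ 2/3 then S.FF i hi ((1-l) * cl (min (6*cl σ-2) (4-6*cl σ))) 1 w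
  else if σ ≤ 5/6 then S.FF i hi 1 (6*cl σ-4) w
  else S.FF i hi 1 1 w

noncomputable def band4 (l σ : ℝ) (w : GR (S.Y.link {i})) : GR S.X :=
  if σ ≤ 1/6 then S.FF i hi 0 (1-6*cl σ) w
  else if σ ≤ 5/6 then
    S.FF i hi ((1-l) * (if σ ≤ 1/3 then 6*cl σ-1 else 1)
        + l * (if σ ≤ 1/3 then 0 else if σ ≤ 2/3 then 3*cl σ-1 else 1))
      ((1-l) * (if σ ≤ 2/3 then 0 else 6*cl σ-4) + l * (if σ ≤ 1/3 then 6*cl σ-1 else 1)) w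
  else S.FF i hi 1 1 w

noncomputable def band5 (l σ : ℝ) (w : GR (S.Y.link {i})) : GR S.X :=
  if σ ≤ 1/3 then S.FF i hi 0 (1 - (1-l) * cl (min (6*cl σ) (2-6*cl σ))) w
  else if σ ≤ 2/3 then S.FF i hi (3*cl σ-1) 1 w
  else S.FF i hi 1 1 w

noncomputable def band6 (l σ : ℝ) (w : GR (S.Y.link {i})) : GR S.X :=
  S.FF i hi ((1-l) * cl (3*cl σ-1) + l * cl σ) 1 w

/-- The coherence square. -/
noncomputable def Tcore (τ σ : ℝ) (w : GR (S.Y.link {i})) : GR S.X :=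
  if τ ≤ 1/6 then S.band1 i hi (6*τ) σ w
  else if τ ≤ 1/3 then S.band2 i hi (6*τ-1) σ w
  else if τ ≤ 1/2 then S.band3 i hi (6*τ-2) σ w
  else if τ ≤ 2/3 then S.band4 i hi (6*τ-3) σ w
  else if τ ≤ 5/6 then S.band5 i hi (6*τ-4) σ w
  else S.band6 i hi (6*τ-5) σ w

/-- The master square `Θ̂`. -/
noncomputable def That (ν s : ℝ) (w : GR (S.Y.link {i})) : GR S.X :=
  if ν ≤ 1/2 then S.Tcore i hi (2*ν) s w
  else S.GEv i hi ((2*ν-1) + s*(2-2*ν)) (S.inL i hi w)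

/-- The corrected homotopy `K'` in the link. -/
noncomputable def K'v (σ : ℝ) (w : GR (S.Y.link {i})) : GR (S.Y.link {i}) :=
  if σ ≤ 1/6 then S.gm i hi (S.inL i hi (S.KEv i hi (1-6*cl σ) w))
  else if σ ≤ 1/3 then S.gm i hi (S.GEv i hi (6*cl σ-1) (S.inL i hi w))
  else if σ ≤ 2/3 then S.gm i hi (S.inL i hi w)
  else if σ ≤ 5/6 then S.KEv i hi (6*cl σ-4) w
  else w

lemma K'v_cont : Continuous fun z : ℝ × GR (S.Y.link {i}) => S.K'v i hi z.1 z.2 := by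
  have hgm := (S.gm i hi).continuous
  have hKE := S.KEv_cont i hi
  have hGE := S.GEv_cont i hi
  have hiL := S.inL_cont i hi
  have hclc : Continuous fun z : ℝ × GR (S.Y.link {i}) => cl z.1 :=
    cl_cont.comp continuous_fst
  have c1 : Continuous fun z : ℝ × GR (S.Y.link {i}) =>
      S.gm i hi (S.inL i hi (S.KEv i hi (1-6*cl z.1) z.2)) := by
    apply hgm.comp
    apply hiL.comp
    exact hKE.comp ((continuous_const.sub (continuous_const.mul hclc)).prodMk
      continuous_snd)
  have c2 : Continuous fun z : ℝ × GR (S.Y.link {i}) =>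
      S.gm i hi (S.GEv i hi (6*cl z.1-1) (S.inL i hi z.2)) := by
    apply hgm.comp
    exact hGE.comp (((continuous_const.mul hclc).sub continuous_const).prodMk
      (hiL.comp continuous_snd))
  have c3 : Continuous fun z : ℝ × GR (S.Y.link {i}) => S.gm i hi (S.inL i hi z.2) :=
    hgm.comp (hiL.comp continuous_snd)
  have c4 : Continuous fun z : ℝ × GR (S.Y.link {i}) => S.KEv i hi (6*cl z.1-4) z.2 :=
    hKE.comp (((continuous_const.mul hclc).sub continuous_const).prodMk
      continuous_snd)
  have c5 : Continuous fun z : ℝ × GR (S.Y.link {i}) => z.2 := continuous_snd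
  unfold K'v
  refine Continuous.if_le ?_ (Continuous.if_le ?_ (Continuous.if_le ?_ (Continuous.if_le ?_ ?_
    continuous_fst continuous_const ?_) continuous_fst continuous_const ?_)
    continuous_fst continuous_const ?_) continuous_fst continuous_const ?_
  · exact c1
  · exact c2
  · exact c3
  · exact c4
  · exact c5
  · -- σ = 5/6 : KEv (6σ-4) w = w
    intro z hz
    rw [hz, cl_of_mem (show (0:ℝ) ≤ 5/6 by norm_num) (show (5:ℝ)/6 ≤ 1 by norm_num),
      S.KEv_one_le i hi (by norm_num)]
  · -- σ = 2/3 : gm (inL w) = KEv (6σ-4) w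
    intro z hz
    rw [hz, if_pos (by norm_num : (2:ℝ)/3 ≤ 5/6),
      cl_of_mem (show (0:ℝ) ≤ 2/3 by norm_num) (show (2:ℝ)/3 ≤ 1 by norm_num),
      S.KEv_nonpos i hi (by norm_num)]
    rfl
  · -- σ = 1/3 : gm (GEv 1 (inL w)) = gm (inL w)
    intro z hz
    rw [hz, if_pos (by norm_num : (1:ℝ)/3 ≤ 2/3),
      cl_of_mem (show (0:ℝ) ≤ 1/3 by norm_num) (show (1:ℝ)/3 ≤ 1 by norm_num),
      S.GEv_one_le i hi (by norm_num)]
  · -- σ = 1/6 : gm (inL (KEv 0 w)) = gm (GEv 0 (inL w))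
    intro z hz
    rw [hz, if_pos (by norm_num : (1:ℝ)/6 ≤ 1/3),
      cl_of_mem (show (0:ℝ) ≤ 1/6 by norm_num) (show (1:ℝ)/6 ≤ 1 by norm_num),
      S.KEv_nonpos i hi (by norm_num), S.GEv_nonpos i hi (by norm_num)]
    rfl

@[simp] lemma K'v_zero (w : GR (S.Y.link {i})) :
    S.K'v i hi 0 w = S.gm i hi (S.inL i hi w) := by
  rw [K'v, if_pos (by norm_num : (0:ℝ) ≤ 1/6), cl_zero, show (1:ℝ)-6*0 = 1 by norm_num,
    S.KEv_one_le i hi le_rfl]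

@[simp] lemma K'v_one (w : GR (S.Y.link {i})) : S.K'v i hi 1 w = w := by
  rw [K'v, if_neg (by norm_num), if_neg (by norm_num), if_neg (by norm_num),
    if_neg (by norm_num)]

lemma K'v_ge_one {σ : ℝ} (h : 1 ≤ σ) (w : GR (S.Y.link {i})) : S.K'v i hi σ w = w := by
  rw [K'v, if_neg (by norm_num; linarith), if_neg (by norm_num; linarith),
    if_neg (by norm_num; linarith)]
  by_cases h5 : σ ≤ 5/6
  · linarith
  · rw [if_neg h5]

end Bands

end S7Data


namespace S7Data

variable {V : Type} (S : S7Data V)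

section Bands2

variable (i : V) (hi : i ∈ S.I)

lemma FF_congr {a a' b b' : ℝ} (ha : a = a') (hb : b = b') (w : GR (S.Y.link {i})) :
    S.FF i hi a b w = S.FF i hi a' b' w := by rw [ha, hb]

lemma XF_congr {a a' b b' : ℝ} (ha : a = a') (hb : b = b') (w : GR (S.Y.link {i})) :
    S.XF i hi a b w = S.XF i hi a' b' w := by rw [ha, hb]

lemma FF_XF_cross (b : ℝ) (w : GR (S.Y.link {i})) :
    S.XF i hi 1 b w = S.FF i hi b 1 w := by rw [XF_1b, FF_a1]

lemma band1_eq_band2 (σ : ℝ) (w : GR (S.Y.link {i})) :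
    S.band1 i hi 1 σ w = S.band2 i hi 0 σ w := by
  unfold band1 band2
  by_cases h1 : σ ≤ 1/6
  · simp only [if_pos h1]
  · have hm0 : (0:ℝ) ≤ cl σ := cl_nonneg σ
    have hm9 : cl σ ≤ 1 := cl_le_one σ
    by_cases h2 : σ ≤ 1/3
    · simp only [if_neg h1, if_pos h2, if_pos (show σ ≤ 1/2 by linarith)]
      apply XF_congr <;> ring
    · by_cases h3 : σ ≤ 1/2
      · have hm2 : 1/3 ≤ cl σ := cl_ge (by norm_num) (by linarith)
        have hm3 : cl σ ≤ 1/2 := cl_le (by norm_num) h3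
        simp only [if_neg h1, if_neg h2, if_pos h3, if_pos (show σ ≤ 2/3 by linarith)]
        rw [min_eq_left (by linarith),
          cl_of_mem (show (0:ℝ) ≤ 6*cl σ-2 by linarith) (show 6*cl σ-2 ≤ (1:ℝ) by linarith),
          S.FF_eq_XF_1 i hi]
        apply XF_congr <;> ring
      · by_cases h4 : σ ≤ 2/3
        · have hm3 : 1/2 ≤ cl σ := cl_ge (by norm_num) (by linarith)
          have hm4 : cl σ ≤ 2/3 := cl_le (by norm_num) h4
          simp only [if_neg h1, if_neg h2, if_neg h3, if_pos h4]
          rw [min_eq_right (by linarith), one_mul]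
        · simp only [if_neg h1, if_neg h2, if_neg h3, if_neg h4]

lemma band2_eq_band3 (σ : ℝ) (w : GR (S.Y.link {i})) :
    S.band2 i hi 1 σ w = S.band3 i hi 0 σ w := by
  unfold band2 band3
  by_cases h1 : σ ≤ 1/6
  · simp only [if_pos h1]
  · have hm0 : (0:ℝ) ≤ cl σ := cl_nonneg σ
    have hm9 : cl σ ≤ 1 := cl_le_one σ
    by_cases h2 : σ ≤ 1/3
    · simp only [if_neg h1, if_pos h2, if_pos (show σ ≤ 1/2 by linarith)]
      rw [S.XF_congr i hi (show (1-(1:ℝ))*0+1*(6*cl σ-1) = 6*cl σ-1 by ring)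
        (show (1-(1:ℝ))*(6*cl σ-1)+1*0 = 0 by ring) w, ← S.FF_eq_XF_0 i hi (6*cl σ-1) w]
    · by_cases h3 : σ ≤ 1/2
      · have hm2 : 1/3 ≤ cl σ := cl_ge (by norm_num) (by linarith)
        have hm3 : cl σ ≤ 1/2 := cl_le (by norm_num) h3
        simp only [if_neg h1, if_neg h2, if_pos h3, if_pos (show σ ≤ 2/3 by linarith)]
        rw [S.XF_congr i hi (show (1-(1:ℝ))*(6*cl σ-2)+1*1 = 1 by ring)
          (show (1-(1:ℝ))*1+1*(6*cl σ-2) = 6*cl σ-2 by ring) w, S.FF_XF_cross i hi,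
          min_eq_left (by linarith),
          cl_of_mem (show (0:ℝ) ≤ 6*cl σ-2 by linarith) (show 6*cl σ-2 ≤ (1:ℝ) by linarith)]
        apply FF_congr <;> ring
      · by_cases h4 : σ ≤ 2/3
        · have hm3 : 1/2 ≤ cl σ := cl_ge (by norm_num) (by linarith)
          simp only [if_neg h1, if_neg h2, if_neg h3, if_pos h4]
          rw [min_eq_right (by linarith)]
          apply FF_congr <;> ring
        · simp only [if_neg h1, if_neg h2, if_neg h3, if_neg h4]

lemma band3_eq_band4 (σ : ℝ) (w : GR (S.Y.link {i})) :
    S.band3 i hi 1 σ w = S.band4 i hi 0 σ w := by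
  unfold band3 band4
  by_cases h1 : σ ≤ 1/6
  · simp only [if_pos h1]
  · by_cases h2 : σ ≤ 1/3
    · simp only [if_neg h1, if_pos h2, if_pos (show σ ≤ 5/6 by linarith),
        if_pos (show σ ≤ 2/3 by linarith)]
      apply FF_congr <;> ring
    · by_cases h4 : σ ≤ 2/3
      · simp only [if_neg h1, if_neg h2, if_pos h4, if_pos (show σ ≤ 5/6 by linarith)]
        refine Eq.trans ?_ (Eq.trans (S.FF_01_eq_FF_10 i hi w) ?_)
        · apply FF_congr <;> ring
        · apply FF_congr <;> ring
      · by_cases h5 : σ ≤ 5/6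
        · simp only [if_neg h1, if_neg h2, if_neg h4, if_pos h5]
          apply FF_congr <;> ring
        · simp only [if_neg h1, if_neg h2, if_neg h4, if_neg h5]

lemma band4_eq_band5 (σ : ℝ) (w : GR (S.Y.link {i})) :
    S.band4 i hi 1 σ w = S.band5 i hi 0 σ w := by
  unfold band4 band5
  have hm0 : (0:ℝ) ≤ cl σ := cl_nonneg σ
  have hm9 : cl σ ≤ 1 := cl_le_one σ
  by_cases h1 : σ ≤ 1/6
  · have hm1 : cl σ ≤ 1/6 := cl_le (by norm_num) h1
    simp only [if_pos h1, if_pos (show σ ≤ 1/3 by linarith)]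
    rw [min_eq_left (by linarith),
      cl_of_mem (show (0:ℝ) ≤ 6*cl σ by linarith) (show 6*cl σ ≤ (1:ℝ) by linarith)]
    apply FF_congr <;> ring
  · by_cases h2 : σ ≤ 1/3
    · have hm1 : 1/6 ≤ cl σ := cl_ge (by norm_num) (by linarith)
      have hm2 : cl σ ≤ 1/3 := cl_le (by norm_num) h2
      simp only [if_neg h1, if_pos h2, if_pos (show σ ≤ 5/6 by linarith),
        if_pos (show σ ≤ 2/3 by linarith)]
      rw [min_eq_right (by linarith),
        cl_of_mem (show (0:ℝ) ≤ 2-6*cl σ by linarith) (show 2-6*cl σ ≤ (1:ℝ) by linarith)]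
      apply FF_congr <;> ring
    · by_cases h4 : σ ≤ 2/3
      · simp only [if_neg h1, if_neg h2, if_pos h4, if_pos (show σ ≤ 5/6 by linarith)]
        apply FF_congr <;> ring
      · by_cases h5 : σ ≤ 5/6
        · simp only [if_neg h1, if_neg h2, if_neg h4, if_pos h5]
          apply FF_congr <;> ring
        · simp only [if_neg h1, if_neg h2, if_neg h4, if_neg h5]

lemma band5_eq_band6 (σ : ℝ) (w : GR (S.Y.link {i})) :
    S.band5 i hi 1 σ w = S.band6 i hi 0 σ w := by
  unfold band5 band6
  have hm0 : (0:ℝ) ≤ cl σ := cl_nonneg σ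
  have hm9 : cl σ ≤ 1 := cl_le_one σ
  by_cases h2 : σ ≤ 1/3
  · have hm2 : cl σ ≤ 1/3 := cl_le (by norm_num) h2
    simp only [if_pos h2]
    rw [cl_of_nonpos (show 3*cl σ-1 ≤ (0:ℝ) by linarith)]
    apply FF_congr <;> ring
  · by_cases h4 : σ ≤ 2/3
    · have hm2 : 1/3 ≤ cl σ := cl_ge (by norm_num) (by linarith)
      have hm4 : cl σ ≤ 2/3 := cl_le (by norm_num) h4
      simp only [if_neg h2, if_pos h4]
      rw [cl_of_mem (show (0:ℝ) ≤ 3*cl σ-1 by linarith) (show 3*cl σ-1 ≤ (1:ℝ) by linarith)]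
      apply FF_congr <;> ring
    · have hm4 : 2/3 ≤ cl σ := cl_ge (by norm_num) (by linarith)
      simp only [if_neg h2, if_neg h4]
      rw [cl_of_one_le (show (1:ℝ) ≤ 3*cl σ-1 by linarith)]
      apply FF_congr <;> ring

end Bands2

end S7Data


namespace S7Data

variable {V : Type} (S : S7Data V)

lemma iic_cl (x : ℝ) : iic (cl x) = iic x := by
  by_cases h0 : x ≤ 0
  · rw [cl_of_nonpos h0, iic_of_nonpos le_rfl, iic_of_nonpos h0]
  · by_cases h1 : 1 ≤ x
    · rw [cl_of_one_le h1, iic_of_one_le le_rfl, iic_of_one_le h1]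
    · rw [cl_of_mem (by linarith) (by linarith)]

section Bands3

variable (i : V) (hi : i ∈ S.I)

lemma GEv_cl (s : ℝ) (x : GR S.X) : S.GEv i hi (cl s) x = S.GEv i hi s x := by
  rw [GEv, GEv, iic_cl]

lemma KEv_cl (s : ℝ) (w : GR (S.Y.link {i})) : S.KEv i hi (cl s) w = S.KEv i hi s w := by
  rw [KEv, KEv, iic_cl]

lemma band1_cont : Continuous fun z : (ℝ × ℝ) × GR (S.Y.link {i}) =>
    S.band1 i hi z.1.1 z.1.2 z.2 := by
  have hl : Continuous fun z : (ℝ × ℝ) × GR (S.Y.link {i}) => z.1.1 :=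
    continuous_fst.comp continuous_fst
  have hσr : Continuous fun z : (ℝ × ℝ) × GR (S.Y.link {i}) => z.1.2 :=
    continuous_snd.comp continuous_fst
  have hσ : Continuous fun z : (ℝ × ℝ) × GR (S.Y.link {i}) => cl z.1.2 := cl_cont.comp hσr
  have hw : Continuous fun z : (ℝ × ℝ) × GR (S.Y.link {i}) => z.2 := continuous_snd
  have c1 : Continuous fun z : (ℝ × ℝ) × GR (S.Y.link {i}) => S.FF i hi 0 (1-6*cl z.1.2) z.2 :=
    (S.FF_cont i hi).comp ((continuous_const.prodMk
      (continuous_const.sub (continuous_const.mul hσ))).prodMk hw)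
  have c2 : Continuous fun z : (ℝ × ℝ) × GR (S.Y.link {i}) => S.XF i hi 0 (6*cl z.1.2-1) z.2 :=
    (S.XF_cont i hi).comp ((continuous_const.prodMk
      ((continuous_const.mul hσ).sub continuous_const)).prodMk hw)
  have c3 : Continuous fun z : (ℝ × ℝ) × GR (S.Y.link {i}) =>
      S.FF i hi (z.1.1 * cl (min (6*cl z.1.2-2) (4-6*cl z.1.2))) 1 z.2 :=
    (S.FF_cont i hi).comp (((hl.mul (cl_cont.comp
      (((continuous_const.mul hσ).sub continuous_const).min
        (continuous_const.sub (continuous_const.mul hσ))))).prodMk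
      continuous_const).prodMk hw)
  have c4 : Continuous fun z : (ℝ × ℝ) × GR (S.Y.link {i}) => S.FF i hi 1 (6*cl z.1.2-4) z.2 :=
    (S.FF_cont i hi).comp ((continuous_const.prodMk
      ((continuous_const.mul hσ).sub continuous_const)).prodMk hw)
  have c5 : Continuous fun z : (ℝ × ℝ) × GR (S.Y.link {i}) => S.FF i hi 1 1 z.2 :=
    (S.FF_cont i hi).comp ((continuous_const.prodMk continuous_const).prodMk hw)
  unfold band1
  refine Continuous.if_le c1 (Continuous.if_le c2 (Continuous.if_le c3 (Continuous.if_le c4 c5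
    hσr continuous_const ?_) hσr continuous_const ?_) hσr continuous_const ?_)
    hσr continuous_const ?_
  · intro z hz
    rw [hz, cl_of_mem (show (0:ℝ) ≤ 5/6 by norm_num) (show (5/6:ℝ) ≤ 1 by norm_num)]
    rw [show (6:ℝ)*(5/6)-4 = 1 by norm_num]
  · intro z hz
    rw [hz, cl_of_mem (show (0:ℝ) ≤ 2/3 by norm_num) (show (2/3:ℝ) ≤ 1 by norm_num)]
    rw [show min ((6:ℝ)*(2/3)-2) (4-6*(2/3)) = 0 by norm_num, cl_zero, mul_zero,
      show (6:ℝ)*(2/3)-4 = 0 by norm_num]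
    rw [if_pos (by norm_num : ((2:ℝ)/3:ℝ) ≤ 5/6)]
    exact S.FF_01_eq_FF_10 i hi z.2
  · intro z hz
    rw [hz, cl_of_mem (show (0:ℝ) ≤ 1/3 by norm_num) (show (1/3:ℝ) ≤ 1 by norm_num)]
    rw [show min ((6:ℝ)*(1/3)-2) (4-6*(1/3)) = 0 by norm_num, cl_zero, mul_zero,
      show (6:ℝ)*(1/3)-1 = 1 by norm_num]
    rw [if_pos (by norm_num : ((1:ℝ)/3:ℝ) ≤ 2/3)]
    exact (S.FF_eq_XF_1 i hi 0 z.2).symm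
  · intro z hz
    rw [hz, cl_of_mem (show (0:ℝ) ≤ 1/6 by norm_num) (show (1/6:ℝ) ≤ 1 by norm_num)]
    rw [show (1:ℝ)-6*(1/6) = 0 by norm_num, show (6:ℝ)*(1/6)-1 = 0 by norm_num,
      if_pos (by norm_num : ((1:ℝ)/6:ℝ) ≤ 1/3)]
    exact S.FF_eq_XF_0 i hi 0 z.2

lemma band2_cont : Continuous fun z : (ℝ × ℝ) × GR (S.Y.link {i}) =>
    S.band2 i hi z.1.1 z.1.2 z.2 := by
  have hl : Continuous fun z : (ℝ × ℝ) × GR (S.Y.link {i}) => z.1.1 :=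
    continuous_fst.comp continuous_fst
  have hσr : Continuous fun z : (ℝ × ℝ) × GR (S.Y.link {i}) => z.1.2 :=
    continuous_snd.comp continuous_fst
  have hσ : Continuous fun z : (ℝ × ℝ) × GR (S.Y.link {i}) => cl z.1.2 := cl_cont.comp hσr
  have hw : Continuous fun z : (ℝ × ℝ) × GR (S.Y.link {i}) => z.2 := continuous_snd
  have c1 : Continuous fun z : (ℝ × ℝ) × GR (S.Y.link {i}) => S.FF i hi 0 (1-6*cl z.1.2) z.2 :=
    (S.FF_cont i hi).comp ((continuous_const.prodMk
      (continuous_const.sub (continuous_const.mul hσ))).prodMk hw)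
  have ha1 : Continuous fun z : (ℝ × ℝ) × GR (S.Y.link {i}) =>
      (if z.1.2 ≤ 1/3 then (0:ℝ) else 6*cl z.1.2-2) := by
    refine Continuous.if_le continuous_const ((continuous_const.mul hσ).sub continuous_const)
      hσr continuous_const ?_
    intro z hz
    rw [hz, cl_of_mem (show (0:ℝ) ≤ 1/3 by norm_num) (show (1/3:ℝ) ≤ 1 by norm_num)]
    norm_num
  have ha2 : Continuous fun z : (ℝ × ℝ) × GR (S.Y.link {i}) =>
      (if z.1.2 ≤ 1/3 then 6*cl z.1.2-1 else (1:ℝ)) := by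
    refine Continuous.if_le ((continuous_const.mul hσ).sub continuous_const) continuous_const
      hσr continuous_const ?_
    intro z hz
    rw [hz, cl_of_mem (show (0:ℝ) ≤ 1/3 by norm_num) (show (1/3:ℝ) ≤ 1 by norm_num)]
    norm_num
  have c2 : Continuous fun z : (ℝ × ℝ) × GR (S.Y.link {i}) =>
      S.XF i hi ((1-z.1.1) * (if z.1.2 ≤ 1/3 then (0:ℝ) else 6*cl z.1.2-2)
          + z.1.1 * (if z.1.2 ≤ 1/3 then 6*cl z.1.2-1 else (1:ℝ)))
        ((1-z.1.1) * (if z.1.2 ≤ 1/3 then 6*cl z.1.2-1 else (1:ℝ))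
          + z.1.1 * (if z.1.2 ≤ 1/3 then (0:ℝ) else 6*cl z.1.2-2)) z.2 :=
    (S.XF_cont i hi).comp (((((continuous_const.sub hl).mul ha1).add (hl.mul ha2)).prodMk
      (((continuous_const.sub hl).mul ha2).add (hl.mul ha1))).prodMk hw)
  have c3 : Continuous fun z : (ℝ × ℝ) × GR (S.Y.link {i}) =>
      S.FF i hi (cl (4-6*cl z.1.2)) 1 z.2 :=
    (S.FF_cont i hi).comp (((cl_cont.comp
      (continuous_const.sub (continuous_const.mul hσ))).prodMk continuous_const).prodMk hw)
  have c4 : Continuous fun z : (ℝ × ℝ) × GR (S.Y.link {i}) => S.FF i hi 1 (6*cl z.1.2-4) z.2 :=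
    (S.FF_cont i hi).comp ((continuous_const.prodMk
      ((continuous_const.mul hσ).sub continuous_const)).prodMk hw)
  have c5 : Continuous fun z : (ℝ × ℝ) × GR (S.Y.link {i}) => S.FF i hi 1 1 z.2 :=
    (S.FF_cont i hi).comp ((continuous_const.prodMk continuous_const).prodMk hw)
  unfold band2
  refine Continuous.if_le c1 (Continuous.if_le c2 (Continuous.if_le c3 (Continuous.if_le c4 c5
    hσr continuous_const ?_) hσr continuous_const ?_) hσr continuous_const ?_)
    hσr continuous_const ?_
  · intro z hz
    rw [hz, cl_of_mem (show (0:ℝ) ≤ 5/6 by norm_num) (show (5/6:ℝ) ≤ 1 by norm_num)]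
    rw [show (6:ℝ)*(5/6)-4 = 1 by norm_num]
  · intro z hz
    rw [hz, cl_of_mem (show (0:ℝ) ≤ 2/3 by norm_num) (show (2/3:ℝ) ≤ 1 by norm_num)]
    rw [show cl (4-6*(2/3)) = 0 by rw [show (4:ℝ)-6*(2/3) = 0 by norm_num]; exact cl_zero,
      show (6:ℝ)*(2/3)-4 = 0 by norm_num]
    rw [if_pos (by norm_num : ((2:ℝ)/3:ℝ) ≤ 5/6)]
    exact S.FF_01_eq_FF_10 i hi z.2
  · intro z hz
    rw [hz]
    rw [if_neg (by norm_num : ¬ (1:ℝ)/2 ≤ 1/3), if_neg (by norm_num : ¬ (1:ℝ)/2 ≤ 1/3),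
      cl_of_mem (show (0:ℝ) ≤ 1/2 by norm_num) (show (1/2:ℝ) ≤ 1 by norm_num)]
    rw [show cl ((4:ℝ)-6*(1/2)) = 1 by rw [show (4:ℝ)-6*(1/2) = 1 by norm_num]; exact cl_one]
    rw [S.FF_eq_XF_1 i hi, if_pos (by norm_num : ((1:ℝ)/2:ℝ) ≤ 2/3)]
    apply XF_congr <;> norm_num
  · intro z hz
    rw [hz]
    rw [if_pos (by norm_num : (1:ℝ)/6 ≤ 1/3), if_pos (by norm_num : (1:ℝ)/6 ≤ 1/3),
      cl_of_mem (show (0:ℝ) ≤ 1/6 by norm_num) (show (1/6:ℝ) ≤ 1 by norm_num)]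
    rw [show (1:ℝ)-6*(1/6) = 0 by norm_num, if_pos (by norm_num : ((1:ℝ)/6:ℝ) ≤ 1/2)]
    refine Eq.trans (S.FF_eq_XF_0 i hi 0 z.2) ?_
    apply XF_congr <;> norm_num

end Bands3

end S7Data


namespace S7Data

variable {V : Type} (S : S7Data V)

section Bands4

variable (i : V) (hi : i ∈ S.I)

lemma GEv_congr {a a' : ℝ} (h : a = a') (x : GR S.X) : S.GEv i hi a x = S.GEv i hi a' x := by
  rw [h]

lemma band3_cont : Continuous fun z : (ℝ × ℝ) × GR (S.Y.link {i}) =>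
    S.band3 i hi z.1.1 z.1.2 z.2 := by
  have hl : Continuous fun z : (ℝ × ℝ) × GR (S.Y.link {i}) => z.1.1 :=
    continuous_fst.comp continuous_fst
  have hσr : Continuous fun z : (ℝ × ℝ) × GR (S.Y.link {i}) => z.1.2 :=
    continuous_snd.comp continuous_fst
  have hσ : Continuous fun z : (ℝ × ℝ) × GR (S.Y.link {i}) => cl z.1.2 := cl_cont.comp hσr
  have hw : Continuous fun z : (ℝ × ℝ) × GR (S.Y.link {i}) => z.2 := continuous_snd
  have c1 : Continuous fun z : (ℝ × ℝ) × GR (S.Y.link {i}) => S.FF i hi 0 (1-6*cl z.1.2) z.2 :=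
    (S.FF_cont i hi).comp ((continuous_const.prodMk
      (continuous_const.sub (continuous_const.mul hσ))).prodMk hw)
  have c2 : Continuous fun z : (ℝ × ℝ) × GR (S.Y.link {i}) => S.FF i hi (6*cl z.1.2-1) 0 z.2 :=
    (S.FF_cont i hi).comp ((((continuous_const.mul hσ).sub continuous_const).prodMk
      continuous_const).prodMk hw)
  have c3 : Continuous fun z : (ℝ × ℝ) × GR (S.Y.link {i}) =>
      S.FF i hi ((1-z.1.1) * cl (min (6*cl z.1.2-2) (4-6*cl z.1.2))) 1 z.2 :=
    (S.FF_cont i hi).comp ((((continuous_const.sub hl).mul (cl_cont.comp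
      (((continuous_const.mul hσ).sub continuous_const).min
        (continuous_const.sub (continuous_const.mul hσ))))).prodMk
      continuous_const).prodMk hw)
  have c4 : Continuous fun z : (ℝ × ℝ) × GR (S.Y.link {i}) => S.FF i hi 1 (6*cl z.1.2-4) z.2 :=
    (S.FF_cont i hi).comp ((continuous_const.prodMk
      ((continuous_const.mul hσ).sub continuous_const)).prodMk hw)
  have c5 : Continuous fun z : (ℝ × ℝ) × GR (S.Y.link {i}) => S.FF i hi 1 1 z.2 :=
    (S.FF_cont i hi).comp ((continuous_const.prodMk continuous_const).prodMk hw)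
  unfold band3
  refine Continuous.if_le c1 (Continuous.if_le c2 (Continuous.if_le c3 (Continuous.if_le c4 c5
    hσr continuous_const ?_) hσr continuous_const ?_) hσr continuous_const ?_)
    hσr continuous_const ?_
  · intro z hz
    rw [hz, cl_of_mem (show (0:ℝ) ≤ 5/6 by norm_num) (show (5:ℝ)/6 ≤ 1 by norm_num),
      show (6:ℝ)*(5/6)-4 = 1 by norm_num]
  · intro z hz
    rw [hz, cl_of_mem (show (0:ℝ) ≤ 2/3 by norm_num) (show (2:ℝ)/3 ≤ 1 by norm_num),
      show min ((6:ℝ)*(2/3)-2) (4-6*(2/3)) = 0 by norm_num, cl_zero, mul_zero,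
      show (6:ℝ)*(2/3)-4 = 0 by norm_num, if_pos (by norm_num : ((2:ℝ)/3:ℝ) ≤ 5/6)]
    exact S.FF_01_eq_FF_10 i hi z.2
  · intro z hz
    rw [hz, cl_of_mem (show (0:ℝ) ≤ 1/3 by norm_num) (show (1:ℝ)/3 ≤ 1 by norm_num),
      show (6:ℝ)*(1/3)-1 = 1 by norm_num,
      show min ((6:ℝ)*(1/3)-2) (4-6*(1/3)) = 0 by norm_num, cl_zero, mul_zero,
      if_pos (by norm_num : ((1:ℝ)/3:ℝ) ≤ 2/3)]
    exact (S.FF_01_eq_FF_10 i hi z.2).symm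
  · intro z hz
    rw [hz, cl_of_mem (show (0:ℝ) ≤ 1/6 by norm_num) (show (1:ℝ)/6 ≤ 1 by norm_num),
      show (1:ℝ)-6*(1/6) = 0 by norm_num, show (6:ℝ)*(1/6)-1 = 0 by norm_num,
      if_pos (by norm_num : ((1:ℝ)/6:ℝ) ≤ 1/3)]

lemma band4_cont : Continuous fun z : (ℝ × ℝ) × GR (S.Y.link {i}) =>
    S.band4 i hi z.1.1 z.1.2 z.2 := by
  have hl : Continuous fun z : (ℝ × ℝ) × GR (S.Y.link {i}) => z.1.1 :=
    continuous_fst.comp continuous_fst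
  have hσr : Continuous fun z : (ℝ × ℝ) × GR (S.Y.link {i}) => z.1.2 :=
    continuous_snd.comp continuous_fst
  have hσ : Continuous fun z : (ℝ × ℝ) × GR (S.Y.link {i}) => cl z.1.2 := cl_cont.comp hσr
  have hw : Continuous fun z : (ℝ × ℝ) × GR (S.Y.link {i}) => z.2 := continuous_snd
  have c1 : Continuous fun z : (ℝ × ℝ) × GR (S.Y.link {i}) => S.FF i hi 0 (1-6*cl z.1.2) z.2 :=
    (S.FF_cont i hi).comp ((continuous_const.prodMk
      (continuous_const.sub (continuous_const.mul hσ))).prodMk hw)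
  have ha1 : Continuous fun z : (ℝ × ℝ) × GR (S.Y.link {i}) =>
      (if z.1.2 ≤ 1/3 then 6*cl z.1.2-1 else (1:ℝ)) := by
    refine Continuous.if_le ((continuous_const.mul hσ).sub continuous_const) continuous_const
      hσr continuous_const ?_
    intro z hz
    rw [hz, cl_of_mem (show (0:ℝ) ≤ 1/3 by norm_num) (show (1:ℝ)/3 ≤ 1 by norm_num)]
    norm_num
  have ha2 : Continuous fun z : (ℝ × ℝ) × GR (S.Y.link {i}) =>
      (if z.1.2 ≤ 1/3 then (0:ℝ) else if z.1.2 ≤ 2/3 then 3*cl z.1.2-1 else 1) := by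
    refine Continuous.if_le continuous_const (Continuous.if_le
      ((continuous_const.mul hσ).sub continuous_const) continuous_const
      hσr continuous_const ?_) hσr continuous_const ?_
    · intro z hz
      rw [hz, cl_of_mem (show (0:ℝ) ≤ 2/3 by norm_num) (show (2:ℝ)/3 ≤ 1 by norm_num)]
      norm_num
    · intro z hz
      rw [hz, if_pos (by norm_num : ((1:ℝ)/3:ℝ) ≤ 2/3),
        cl_of_mem (show (0:ℝ) ≤ 1/3 by norm_num) (show (1:ℝ)/3 ≤ 1 by norm_num)]
      norm_num
  have ha3 : Continuous fun z : (ℝ × ℝ) × GR (S.Y.link {i}) =>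
      (if z.1.2 ≤ 2/3 then (0:ℝ) else 6*cl z.1.2-4) := by
    refine Continuous.if_le continuous_const ((continuous_const.mul hσ).sub continuous_const)
      hσr continuous_const ?_
    intro z hz
    rw [hz, cl_of_mem (show (0:ℝ) ≤ 2/3 by norm_num) (show (2:ℝ)/3 ≤ 1 by norm_num)]
    norm_num
  have c2 : Continuous fun z : (ℝ × ℝ) × GR (S.Y.link {i}) =>
      S.FF i hi ((1-z.1.1) * (if z.1.2 ≤ 1/3 then 6*cl z.1.2-1 else (1:ℝ))
          + z.1.1 * (if z.1.2 ≤ 1/3 then (0:ℝ) else if z.1.2 ≤ 2/3 then 3*cl z.1.2-1 else 1))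
        ((1-z.1.1) * (if z.1.2 ≤ 2/3 then (0:ℝ) else 6*cl z.1.2-4)
          + z.1.1 * (if z.1.2 ≤ 1/3 then 6*cl z.1.2-1 else (1:ℝ))) z.2 :=
    (S.FF_cont i hi).comp (((((continuous_const.sub hl).mul ha1).add (hl.mul ha2)).prodMk
      (((continuous_const.sub hl).mul ha3).add (hl.mul ha1))).prodMk hw)
  have c5 : Continuous fun z : (ℝ × ℝ) × GR (S.Y.link {i}) => S.FF i hi 1 1 z.2 :=
    (S.FF_cont i hi).comp ((continuous_const.prodMk continuous_const).prodMk hw)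
  unfold band4
  refine Continuous.if_le c1 (Continuous.if_le c2 c5 hσr continuous_const ?_)
    hσr continuous_const ?_
  · intro z hz
    rw [hz]
    rw [if_neg (by norm_num : ¬ (5:ℝ)/6 ≤ 1/3), if_neg (by norm_num : ¬ (5:ℝ)/6 ≤ 1/3),
      if_neg (by norm_num : ¬ (5:ℝ)/6 ≤ 2/3), if_neg (by norm_num : ¬ (5:ℝ)/6 ≤ 2/3),
      cl_of_mem (show (0:ℝ) ≤ 5/6 by norm_num) (show (5:ℝ)/6 ≤ 1 by norm_num)]
    apply FF_congr <;> norm_num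
  · intro z hz
    rw [hz]
    rw [if_pos (by norm_num : ((1:ℝ)/6:ℝ) ≤ 5/6), if_pos (by norm_num : ((1:ℝ)/6:ℝ) ≤ 1/3),
      if_pos (by norm_num : ((1:ℝ)/6:ℝ) ≤ 1/3), if_pos (by norm_num : ((1:ℝ)/6:ℝ) ≤ 2/3),
      cl_of_mem (show (0:ℝ) ≤ 1/6 by norm_num) (show (1:ℝ)/6 ≤ 1 by norm_num)]
    apply FF_congr <;> norm_num

lemma band5_cont : Continuous fun z : (ℝ × ℝ) × GR (S.Y.link {i}) =>
    S.band5 i hi z.1.1 z.1.2 z.2 := by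
  have hl : Continuous fun z : (ℝ × ℝ) × GR (S.Y.link {i}) => z.1.1 :=
    continuous_fst.comp continuous_fst
  have hσr : Continuous fun z : (ℝ × ℝ) × GR (S.Y.link {i}) => z.1.2 :=
    continuous_snd.comp continuous_fst
  have hσ : Continuous fun z : (ℝ × ℝ) × GR (S.Y.link {i}) => cl z.1.2 := cl_cont.comp hσr
  have hw : Continuous fun z : (ℝ × ℝ) × GR (S.Y.link {i}) => z.2 := continuous_snd
  have c1 : Continuous fun z : (ℝ × ℝ) × GR (S.Y.link {i}) =>
      S.FF i hi 0 (1 - (1-z.1.1) * cl (min (6*cl z.1.2) (2-6*cl z.1.2))) z.2 :=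
    (S.FF_cont i hi).comp ((continuous_const.prodMk
      (continuous_const.sub ((continuous_const.sub hl).mul (cl_cont.comp
        ((continuous_const.mul hσ).min
          (continuous_const.sub (continuous_const.mul hσ))))))).prodMk hw)
  have c2 : Continuous fun z : (ℝ × ℝ) × GR (S.Y.link {i}) =>
      S.FF i hi (3*cl z.1.2-1) 1 z.2 :=
    (S.FF_cont i hi).comp ((((continuous_const.mul hσ).sub continuous_const).prodMk
      continuous_const).prodMk hw)
  have c5 : Continuous fun z : (ℝ × ℝ) × GR (S.Y.link {i}) => S.FF i hi 1 1 z.2 :=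
    (S.FF_cont i hi).comp ((continuous_const.prodMk continuous_const).prodMk hw)
  unfold band5
  refine Continuous.if_le c1 (Continuous.if_le c2 c5 hσr continuous_const ?_)
    hσr continuous_const ?_
  · intro z hz
    rw [hz, cl_of_mem (show (0:ℝ) ≤ 2/3 by norm_num) (show (2:ℝ)/3 ≤ 1 by norm_num)]
    apply FF_congr <;> norm_num
  · intro z hz
    rw [hz, cl_of_mem (show (0:ℝ) ≤ 1/3 by norm_num) (show (1:ℝ)/3 ≤ 1 by norm_num),
      show min ((6:ℝ)*(1/3)) (2-6*(1/3)) = 0 by norm_num, cl_zero,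
      if_pos (by norm_num : ((1:ℝ)/3:ℝ) ≤ 2/3)]
    apply FF_congr <;> norm_num

lemma band6_cont : Continuous fun z : (ℝ × ℝ) × GR (S.Y.link {i}) =>
    S.band6 i hi z.1.1 z.1.2 z.2 := by
  have hl : Continuous fun z : (ℝ × ℝ) × GR (S.Y.link {i}) => z.1.1 :=
    continuous_fst.comp continuous_fst
  have hσr : Continuous fun z : (ℝ × ℝ) × GR (S.Y.link {i}) => z.1.2 :=
    continuous_snd.comp continuous_fst
  have hσ : Continuous fun z : (ℝ × ℝ) × GR (S.Y.link {i}) => cl z.1.2 := cl_cont.comp hσr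
  have hw : Continuous fun z : (ℝ × ℝ) × GR (S.Y.link {i}) => z.2 := continuous_snd
  exact (S.FF_cont i hi).comp (((((continuous_const.sub hl).mul (cl_cont.comp
    ((continuous_const.mul hσ).sub continuous_const))).add (hl.mul hσ)).prodMk
    continuous_const).prodMk hw)

lemma Tcore_cont : Continuous fun z : (ℝ × ℝ) × GR (S.Y.link {i}) =>
    S.Tcore i hi z.1.1 z.1.2 z.2 := by
  have hτ : Continuous fun z : (ℝ × ℝ) × GR (S.Y.link {i}) => z.1.1 :=
    continuous_fst.comp continuous_fst
  have remap : ∀ c : ℝ, Continuous fun z : (ℝ × ℝ) × GR (S.Y.link {i}) =>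
      (((6*z.1.1-c, z.1.2), z.2) : (ℝ × ℝ) × GR (S.Y.link {i})) := fun c =>
    (((continuous_const.mul hτ).sub continuous_const).prodMk
      (continuous_snd.comp continuous_fst)).prodMk continuous_snd
  have b1 := (S.band1_cont i hi).comp (remap 0)
  have b2 := (S.band2_cont i hi).comp (remap 1)
  have b3 := (S.band3_cont i hi).comp (remap 2)
  have b4 := (S.band4_cont i hi).comp (remap 3)
  have b5 := (S.band5_cont i hi).comp (remap 4)
  have b6 := (S.band6_cont i hi).comp (remap 5)
  unfold Tcore
  have e1 : Continuous fun z : (ℝ × ℝ) × GR (S.Y.link {i}) =>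
      S.band1 i hi (6*z.1.1-0) z.1.2 z.2 := b1
  refine Continuous.if_le ?_ (Continuous.if_le b2 (Continuous.if_le b3 (Continuous.if_le b4
    (Continuous.if_le b5 b6 hτ continuous_const ?_) hτ continuous_const ?_)
    hτ continuous_const ?_) hτ continuous_const ?_) hτ continuous_const ?_
  · have : (fun z : (ℝ × ℝ) × GR (S.Y.link {i}) => S.band1 i hi (6*z.1.1) z.1.2 z.2)
        = fun z => S.band1 i hi (6*z.1.1-0) z.1.2 z.2 := by
      funext z; rw [sub_zero]
    rw [this]; exact e1
  · intro z hz
    rw [hz, show (6:ℝ)*(5/6)-4 = 1 by norm_num, show (6:ℝ)*(5/6)-5 = 0 by norm_num]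
    exact S.band5_eq_band6 i hi z.1.2 z.2
  · intro z hz
    rw [hz, if_pos (by norm_num : ((2:ℝ)/3:ℝ) ≤ 5/6), show (6:ℝ)*(2/3)-3 = 1 by norm_num,
      show (6:ℝ)*(2/3)-4 = 0 by norm_num]
    exact S.band4_eq_band5 i hi z.1.2 z.2
  · intro z hz
    rw [hz, if_pos (by norm_num : ((1:ℝ)/2:ℝ) ≤ 2/3), show (6:ℝ)*(1/2)-2 = 1 by norm_num,
      show (6:ℝ)*(1/2)-3 = 0 by norm_num]
    exact S.band3_eq_band4 i hi z.1.2 z.2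
  · intro z hz
    rw [hz, if_pos (by norm_num : ((1:ℝ)/3:ℝ) ≤ 1/2), show (6:ℝ)*(1/3)-1 = 1 by norm_num,
      show (6:ℝ)*(1/3)-2 = 0 by norm_num]
    exact S.band2_eq_band3 i hi z.1.2 z.2
  · intro z hz
    rw [hz, if_pos (by norm_num : ((1:ℝ)/6:ℝ) ≤ 1/3), show (6:ℝ)*(1/6)-1 = 0 by norm_num,
      show (6:ℝ)*(1/6) = 1 by norm_num]
    exact S.band1_eq_band2 i hi z.1.2 z.2

lemma Tcore_tau1 (σ : ℝ) (w : GR (S.Y.link {i})) :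
    S.Tcore i hi 1 σ w = S.GEv i hi σ (S.inL i hi w) := by
  rw [Tcore, if_neg (by norm_num), if_neg (by norm_num), if_neg (by norm_num),
    if_neg (by norm_num), if_neg (by norm_num)]
  rw [band6, S.FF_a1 i hi]
  rw [show (1-((6:ℝ)*1-5)) * cl (3*cl σ-1) + (6*1-5) * cl σ = cl σ by ring]
  rw [S.GEv_cl i hi]

lemma That_cont : Continuous fun z : (ℝ × ℝ) × GR (S.Y.link {i}) =>
    S.That i hi z.1.1 z.1.2 z.2 := by
  have hν : Continuous fun z : (ℝ × ℝ) × GR (S.Y.link {i}) => z.1.1 :=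
    continuous_fst.comp continuous_fst
  have hs : Continuous fun z : (ℝ × ℝ) × GR (S.Y.link {i}) => z.1.2 :=
    continuous_snd.comp continuous_fst
  have hw : Continuous fun z : (ℝ × ℝ) × GR (S.Y.link {i}) => z.2 := continuous_snd
  have hTc : Continuous fun z : (ℝ × ℝ) × GR (S.Y.link {i}) =>
      S.Tcore i hi (2*z.1.1) z.1.2 z.2 :=
    (S.Tcore_cont i hi).comp
      (((continuous_const.mul hν).prodMk hs).prodMk hw)
  have hGE : Continuous fun z : (ℝ × ℝ) × GR (S.Y.link {i}) =>
      S.GEv i hi ((2*z.1.1-1) + z.1.2*(2-2*z.1.1)) (S.inL i hi z.2) :=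
    (S.GEv_cont i hi).comp
      ((((continuous_const.mul hν).sub continuous_const).add
        (hs.mul (continuous_const.sub (continuous_const.mul hν)))).prodMk
        ((S.inL_cont i hi).comp hw))
  unfold That
  refine Continuous.if_le hTc hGE hν continuous_const ?_
  intro z hz
  rw [hz, show (2:ℝ)*(1/2) = 1 by norm_num, S.Tcore_tau1 i hi]
  apply S.GEv_congr i hi
  ring

/-! Edge lemmas for `Θ̂`. -/

lemma Tcore_s0 (τ : ℝ) (w : GR (S.Y.link {i})) :
    S.Tcore i hi τ 0 w = S.FF i hi 0 1 w := by
  have hb1 : ∀ l, S.band1 i hi l 0 w = S.FF i hi 0 1 w := by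
    intro l
    rw [band1, if_pos (by norm_num : (0:ℝ) ≤ 1/6), cl_zero]
    norm_num
  have hb2 : ∀ l, S.band2 i hi l 0 w = S.FF i hi 0 1 w := by
    intro l
    rw [band2, if_pos (by norm_num : (0:ℝ) ≤ 1/6), cl_zero]
    norm_num
  have hb3 : ∀ l, S.band3 i hi l 0 w = S.FF i hi 0 1 w := by
    intro l
    rw [band3, if_pos (by norm_num : (0:ℝ) ≤ 1/6), cl_zero]
    norm_num
  have hb4 : ∀ l, S.band4 i hi l 0 w = S.FF i hi 0 1 w := by
    intro l
    rw [band4, if_pos (by norm_num : (0:ℝ) ≤ 1/6), cl_zero]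
    norm_num
  have hb5 : ∀ l, S.band5 i hi l 0 w = S.FF i hi 0 1 w := by
    intro l
    rw [band5, if_pos (by norm_num : (0:ℝ) ≤ 1/3), cl_zero,
      show min ((6:ℝ)*0) (2-6*0) = 0 by norm_num, cl_zero]
    apply FF_congr <;> ring
  have hb6 : ∀ l, S.band6 i hi l 0 w = S.FF i hi 0 1 w := by
    intro l
    rw [band6, cl_zero, show (3:ℝ)*0-1 = -1 by norm_num, cl_of_nonpos (by norm_num)]
    apply FF_congr <;> ring
  rw [Tcore]
  split_ifs <;> first | apply hb1 | apply hb2 | apply hb3 | apply hb4 | apply hb5 | apply hb6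

lemma Tcore_s1 (τ : ℝ) (w : GR (S.Y.link {i})) :
    S.Tcore i hi τ 1 w = S.FF i hi 1 1 w := by
  have hb1 : ∀ l, S.band1 i hi l 1 w = S.FF i hi 1 1 w := by
    intro l
    rw [band1, if_neg (by norm_num), if_neg (by norm_num), if_neg (by norm_num),
      if_neg (by norm_num)]
  have hb2 : ∀ l, S.band2 i hi l 1 w = S.FF i hi 1 1 w := by
    intro l
    rw [band2, if_neg (by norm_num), if_neg (by norm_num), if_neg (by norm_num),
      if_neg (by norm_num)]
  have hb3 : ∀ l, S.band3 i hi l 1 w = S.FF i hi 1 1 w := by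
    intro l
    rw [band3, if_neg (by norm_num), if_neg (by norm_num), if_neg (by norm_num),
      if_neg (by norm_num)]
  have hb4 : ∀ l, S.band4 i hi l 1 w = S.FF i hi 1 1 w := by
    intro l
    rw [band4, if_neg (by norm_num), if_neg (by norm_num)]
  have hb5 : ∀ l, S.band5 i hi l 1 w = S.FF i hi 1 1 w := by
    intro l
    rw [band5, if_neg (by norm_num), if_neg (by norm_num)]
  have hb6 : ∀ l, S.band6 i hi l 1 w = S.FF i hi 1 1 w := by
    intro l
    rw [band6, cl_one, show (3:ℝ)*1-1 = 2 by norm_num, cl_of_one_le (by norm_num)]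
    apply FF_congr <;> ring
  rw [Tcore]
  split_ifs <;> first | apply hb1 | apply hb2 | apply hb3 | apply hb4 | apply hb5 | apply hb6

lemma FF_11 (w : GR (S.Y.link {i})) : S.FF i hi 1 1 w = S.inL i hi w := by
  rw [S.FF_1b i hi, S.KEv_one_le i hi le_rfl]

lemma That_s1 (ν : ℝ) (w : GR (S.Y.link {i})) : S.That i hi ν 1 w = S.inL i hi w := by
  rw [That]
  split_ifs with h
  · rw [S.Tcore_s1 i hi, S.FF_11 i hi]
  · rw [show (2*ν-1) + 1*((2:ℝ)-2*ν) = 1 by ring, S.GEv_one_le i hi le_rfl]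

lemma That_nu0 (s : ℝ) (w : GR (S.Y.link {i})) :
    S.That i hi 0 s w = S.inL i hi (S.K'v i hi s w) := by
  rw [That, if_pos (by norm_num : (0:ℝ) ≤ 1/2), show (2:ℝ)*0 = 0 by norm_num]
  -- Tcore 0 = band1 0 and band1 0 matches K'v
  rw [Tcore, if_pos (by norm_num : (0:ℝ) ≤ 1/6), show (6:ℝ)*0 = 0 by norm_num]
  rw [band1, K'v]
  split_ifs with h1 h2 h3 h4
  · rw [FF, S.GEv_nonpos i hi le_rfl]; rfl
  · rw [XF, S.GEv_nonpos i hi le_rfl]; rfl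
  · rw [show (0:ℝ) * cl (min (6*cl s-2) (4-6*cl s)) = 0 by ring, FF,
      S.KEv_one_le i hi le_rfl, S.GEv_nonpos i hi le_rfl]
    rfl
  · rw [S.FF_1b i hi]
  · rw [S.FF_11 i hi]

lemma That_s0 (ν : ℝ) (w : GR (S.Y.link {i})) :
    S.That i hi ν 0 w = S.GEv i hi (2*ν-1) (S.inL i hi w) := by
  rw [That]
  split_ifs with h
  · rw [S.Tcore_s0 i hi, S.FF_a1 i hi, S.GEv_nonpos i hi le_rfl,
      S.GEv_nonpos i hi (by linarith : 2*ν-1 ≤ 0)]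
  · apply S.GEv_congr i hi; ring

lemma That_r (t : ℝ) (w : GR (S.Y.link {i})) :
    S.That i hi (cl (2-4*t)) 0 w = S.GEv i hi (3-8*t) (S.inL i hi w) := by
  rw [S.That_s0 i hi]
  by_cases h1 : t ≤ 1/4
  · rw [cl_of_one_le (by linarith), S.GEv_one_le i hi (by norm_num),
      S.GEv_one_le i hi (by linarith)]
  · by_cases h2 : t ≤ 1/2
    · rw [cl_of_mem (show (0:ℝ) ≤ 2-4*t by linarith) (show 2-4*t ≤ (1:ℝ) by linarith)]
      apply S.GEv_congr i hi; ring
    · rw [cl_of_nonpos (by linarith)]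
      rw [S.GEv_nonpos i hi (by norm_num), S.GEv_nonpos i hi (by linarith : 3-8*t ≤ 0)]

end Bands4

end S7Data


namespace S7Data

variable {V : Type} (S : S7Data V)

noncomputable def hZlow (t u : ℝ) : ℝ := if u ≤ 1/2 then (2*t-1)*(1-2*u) else t*(2*u-1)

noncomputable def hZ3 (t u : ℝ) : ℝ :=
  (1-(4*t-2)) * hZlow t u + (4*t-2) * ((1-u)*(2*t-1)+u*t)

noncomputable def sZ3 (t u : ℝ) : ℝ := (1-(4*t-2)) * (min (2*u) 1) + (4*t-2) * u

lemma hZlow_cont : Continuous fun z : ℝ × ℝ => hZlow z.1 z.2 := by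
  unfold hZlow
  refine Continuous.if_le ?_ ?_ continuous_snd continuous_const ?_
  · exact ((continuous_const.mul continuous_fst).sub continuous_const).mul
      (continuous_const.sub (continuous_const.mul continuous_snd))
  · exact continuous_fst.mul ((continuous_const.mul continuous_snd).sub continuous_const)
  · intro z hz; rw [hz]; ring

lemma hZ3_cont : Continuous fun z : ℝ × ℝ => hZ3 z.1 z.2 := by
  unfold hZ3
  apply Continuous.add
  · exact (continuous_const.sub ((continuous_const.mul continuous_fst).sub
      continuous_const)).mul hZlow_cont
  · exact ((continuous_const.mul continuous_fst).sub continuous_const).mul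
      (((continuous_const.sub continuous_snd).mul
        ((continuous_const.mul continuous_fst).sub continuous_const)).add
        (continuous_snd.mul continuous_fst))

lemma sZ3_cont : Continuous fun z : ℝ × ℝ => sZ3 z.1 z.2 := by
  unfold sZ3
  apply Continuous.add
  · exact (continuous_const.sub ((continuous_const.mul continuous_fst).sub
      continuous_const)).mul ((continuous_const.mul continuous_snd).min continuous_const)
  · exact ((continuous_const.mul continuous_fst).sub continuous_const).mul continuous_snd

lemma coneF_zero (i : V) (x : V → ℝ) : coneF i 0 x = x := by
  funext v
  rw [coneF]
  split <;> ring

lemma coneF_cont {α : Type*} [TopologicalSpace α] {i : V} {h : α → ℝ} {x : α → V → ℝ}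
    (hh : Continuous h) (hx : Continuous x) : Continuous fun a => coneF i (h a) (x a) := by
  apply continuous_pi
  intro v
  unfold coneF
  by_cases hvi : v = i
  · simp only [if_pos hvi]
    exact hh.add ((continuous_const.sub hh).mul ((continuous_apply v).comp hx))
  · simp only [if_neg hvi]
    exact continuous_const.add ((continuous_const.sub hh).mul ((continuous_apply v).comp hx))

section BDef

variable (i : V) (hi : i ∈ S.I)

lemma K'v_congr {σ σ' : ℝ} (h : σ = σ') (w : GR (S.Y.link {i})) :
    S.K'v i hi σ w = S.K'v i hi σ' w := by rw [h]

lemma That_nu1 (s : ℝ) (w : GR (S.Y.link {i})) : S.That i hi 1 s w = S.inL i hi w := by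
  rw [That, if_neg (by norm_num : ¬ (1:ℝ) ≤ 1/2)]
  rw [S.GEv_congr i hi (show (2*1-1) + s*((2:ℝ)-2*1) = 1 by ring), S.GEv_one_le i hi le_rfl]

/-- The main formula for the homotopy `B` (for `u` already clamped). -/
noncomputable def mainB (t u : ℝ) (w : GR (S.Y.link {i})) : V → ℝ :=
  if t ≤ 1/2 then
    (if u ≤ 1/2 then (S.That i hi (cl (2-4*t)) (2*u) w).1
     else coneF i (t*(2*u-1)) (S.inL i hi w).1)
  else if t ≤ 3/4 then
    coneF i (hZ3 t u) (S.inL i hi (S.K'v i hi (sZ3 t u) w)).1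
  else coneF i ((1-u)*(2*t-1)+u*t) (S.inL i hi (S.K'v i hi u w)).1

end BDef

/-- The homotopy `B` as a raw function. -/
noncomputable def Bfn (u' : ℝ) (p : GR S.Y) : V → ℝ :=
  if h : ∃ j ∈ S.I, 0 < (S.inclY p).1 j then
    if h1 : S.tI (S.inclY p) < 1 then
      S.mainB h.choose h.choose_spec.1 ((S.inclY p).1 h.choose) (cl u')
        ⟨S.nf (S.inclY p), S.nf_memLink p h.choose_spec.1 h.choose_spec.2 h1⟩
    else singleF h.choose
  else p.1

lemma Bfn_eq_of (u' : ℝ) (p : GR S.Y) {i₀ : V} (hi₀ : i₀ ∈ S.I)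
    (hp : 0 < (S.inclY p).1 i₀) (h1 : S.tI (S.inclY p) < 1) :
    S.Bfn u' p = S.mainB i₀ hi₀ ((S.inclY p).1 i₀) (cl u')
      ⟨S.nf (S.inclY p), S.nf_memLink p hi₀ hp h1⟩ := by
  have h : ∃ j ∈ S.I, 0 < (S.inclY p).1 j := ⟨i₀, hi₀, hp⟩
  have he : h.choose = i₀ :=
    S.uniqI (S.inclY p) h.choose_spec.1 hi₀ h.choose_spec.2 hp
  subst he
  rw [Bfn, dif_pos h, dif_pos h1]

lemma Bfn_eq_single (u' : ℝ) (p : GR S.Y) {i₀ : V} (hi₀ : i₀ ∈ S.I)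
    (hp : 0 < (S.inclY p).1 i₀) (h1 : ¬ S.tI (S.inclY p) < 1) :
    S.Bfn u' p = singleF i₀ := by
  have h : ∃ j ∈ S.I, 0 < (S.inclY p).1 j := ⟨i₀, hi₀, hp⟩
  have he : h.choose = i₀ :=
    S.uniqI (S.inclY p) h.choose_spec.1 hi₀ h.choose_spec.2 hp
  subst he
  rw [Bfn, dif_pos h, dif_neg h1]

lemma Bfn_zero (p : GR S.Y) : S.Bfn 0 p = S.Afn 0 (S.inclY p) := by
  set P := S.inclY p with hP
  by_cases h : ∃ j ∈ S.I, 0 < P.1 j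
  · obtain ⟨i, hi, hp⟩ := h
    by_cases h1 : S.tI P < 1
    · rw [S.Bfn_eq_of 0 p hi hp h1, S.Afn_eq_of 0 P hi hp h1]
      set t := P.1 i with ht
      have hx : S.inL i hi (⟨S.nf P, S.nf_memLink p hi hp h1⟩ : GR (S.Y.link {i}))
          = (⟨S.nf P, S.nf_memX P h1⟩ : GR S.X) := Subtype.ext rfl
      rw [mainB, cl_zero]
      by_cases h2 : t ≤ 1/2
      · rw [if_pos h2, if_pos (by norm_num : (0:ℝ) ≤ 1/2), show (2:ℝ)*0 = 0 by norm_num,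
          S.That_r i hi, hx, mainA]
        have hhA : hA t 0 = 0 := by
          rw [hA, cl_zero, max_eq_right (by linarith)]; ring
        have hsA : sA t 0 = 3-8*t := by rw [sA, cl_zero]; ring
        rw [hhA, hsA, coneF_zero]
      · have hhA : hA t 0 = 2*t-1 := by
          rw [hA, cl_zero, max_eq_left (by linarith)]; ring
        have hsA : sA t 0 = 3-8*t := by rw [sA, cl_zero]; ring
        have hGE : S.GEv i hi (sA t 0) (⟨S.nf P, S.nf_memX P h1⟩ : GR S.X)
            = inclGR (S.hsub i hi) (S.gm i hi ⟨S.nf P, S.nf_memX P h1⟩) := by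
          rw [hsA]
          exact S.GEv_nonpos i hi (by linarith) _
        rw [if_neg h2]
        by_cases h3 : t ≤ 3/4
        · rw [if_pos h3, mainA, hhA, hGE]
          have hσ : sZ3 t 0 = 0 := by
            rw [sZ3, show min ((2:ℝ)*0) 1 = 0 by norm_num]; ring
          have hh3 : hZ3 t 0 = 2*t-1 := by
            rw [hZ3, hZlow, if_pos (by norm_num : (0:ℝ) ≤ 1/2)]; ring
          rw [hσ, hh3, S.K'v_zero i hi, hx]
          rfl
        · rw [if_neg h3, mainA, hhA, hGE]
          rw [show (1-(0:ℝ))*(2*t-1)+0*t = 2*t-1 by ring, S.K'v_zero i hi, hx]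
          rfl
    · rw [S.Bfn_eq_single 0 p hi hp h1, S.Afn_eq_single 0 P hi hp h1]
  · rw [Bfn, dif_neg h, Afn, dif_neg h]
    rfl

end S7Data


namespace S7Data

variable {V : Type} (S : S7Data V)

lemma cone_nf_eq (p : GR S.Y) {i : V} (hi : i ∈ S.I) (hp : 0 < (S.inclY p).1 i)
    (h1 : S.tI (S.inclY p) < 1) :
    coneF i ((S.inclY p).1 i) (S.nf (S.inclY p)) = p.1 := by
  set P := S.inclY p with hPdef
  have htI : S.tI P = P.1 i := S.tI_eq P hi hp
  funext v
  rw [coneF]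
  by_cases hvi : v = i
  · subst hvi
    rw [if_pos rfl]
    have : S.nf P v = 0 := by simp only [nf, if_pos hi]
    rw [this]
    show P.1 v + (1 - P.1 v) * 0 = p.1 v
    ring_nf
    rfl
  · rw [if_neg hvi, zero_add]
    by_cases hvI : v ∈ S.I
    · have h0 : S.nf P v = 0 := by simp only [nf, if_pos hvI]
      have h0' : P.1 v = 0 := S.coordI_eq_zero P hi hp hvI hvi
      rw [h0, mul_zero]
      exact h0'.symm
    · simp only [nf, if_neg hvI, htI]
      have hne : 1 - P.1 i ≠ 0 := by
        rw [← htI]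
        intro hc
        rw [sub_eq_zero] at hc
        rw [← hc] at h1
        exact lt_irrefl _ h1
      show (1 - P.1 i) * (P.1 v / (1 - P.1 i)) = p.1 v
      field_simp
      rfl

lemma Bfn_one (p : GR S.Y) : S.Bfn 1 p = p.1 := by
  set P := S.inclY p with hPdef
  by_cases h : ∃ j ∈ S.I, 0 < P.1 j
  · obtain ⟨i, hi, hp⟩ := h
    by_cases h1 : S.tI P < 1
    · rw [S.Bfn_eq_of 1 p hi hp h1, mainB, cl_one]
      set t := P.1 i with ht
      have hw : (S.inL i hi (⟨S.nf P, S.nf_memLink p hi hp h1⟩ : GR (S.Y.link {i}))).1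
          = S.nf P := rfl
      by_cases h2 : t ≤ 1/2
      · rw [if_pos h2, if_neg (by norm_num : ¬ (1:ℝ) ≤ 1/2)]
        rw [show t*(2*1-1) = t by ring]
        rw [hw]
        exact S.cone_nf_eq p hi hp h1
      · rw [if_neg h2]
        by_cases h3 : t ≤ 3/4
        · rw [if_pos h3]
          have hh : hZ3 t 1 = t := by
            rw [hZ3, hZlow, if_neg (by norm_num : ¬ (1:ℝ) ≤ 1/2)]; ring
          have hσ : sZ3 t 1 = 1 := by
            rw [sZ3, show min ((2:ℝ)*1) 1 = 1 by norm_num]; ring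
          rw [hh, hσ, S.K'v_one i hi]
          exact S.cone_nf_eq p hi hp h1
        · rw [if_neg h3]
          rw [show (1-(1:ℝ))*(2*t-1)+1*t = t by ring, S.K'v_one i hi]
          exact S.cone_nf_eq p hi hp h1
    · rw [S.Bfn_eq_single 1 p hi hp h1]
      have ht1 : S.tI P = 1 := S.tI_eq_one_of_not_lt P h1
      have hpi1 : P.1 i = 1 := by rw [← S.tI_eq P hi hp]; exact ht1
      funext v
      rw [singleF]
      by_cases hvi : v = i
      · rw [if_pos hvi, hvi]
        exact hpi1.symm
      · rw [if_neg hvi]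
        exact (S.coords_of_apex P hpi1 hvi).symm
  · rw [Bfn, dif_neg h]

lemma hZ3_nonneg {t u : ℝ} (h2 : 1/2 < t) (h3 : t ≤ 3/4) (hu0 : 0 ≤ u) (hu1 : u ≤ 1) :
    0 ≤ hZ3 t u := by
  have hH : 0 ≤ (1-u)*(2*t-1)+u*t :=
    add_nonneg (mul_nonneg (by linarith) (by linarith)) (mul_nonneg hu0 (by linarith))
  have hL : 0 ≤ hZlow t u := by
    rw [hZlow]; split
    · exact mul_nonneg (by linarith) (by linarith)
    · next hc => push_neg at hc; exact mul_nonneg (by linarith) (by linarith)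
  rw [hZ3]
  have := mul_nonneg (show (0:ℝ) ≤ 1-(4*t-2) by linarith) hL
  have := mul_nonneg (show (0:ℝ) ≤ 4*t-2 by linarith) hH
  linarith

lemma hZ3_le_one {t u : ℝ} (h2 : 1/2 < t) (h3 : t ≤ 3/4) (hu0 : 0 ≤ u) (hu1 : u ≤ 1) :
    hZ3 t u ≤ 1 := by
  have hH : (1-u)*(2*t-1)+u*t ≤ 1 := by nlinarith
  have hL : hZlow t u ≤ 1 := by
    rw [hZlow]; split
    · nlinarith
    · next hc => push_neg at hc; nlinarith
  rw [hZ3]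
  have e1 : (1-(4*t-2)) * hZlow t u ≤ (1-(4*t-2)) * 1 :=
    mul_le_mul_of_nonneg_left hL (by linarith)
  have e2 : (4*t-2) * ((1-u)*(2*t-1)+u*t) ≤ (4*t-2) * 1 :=
    mul_le_mul_of_nonneg_left hH (by linarith)
  nlinarith

lemma Bfn_memY (u' : ℝ) (p : GR S.Y) :
    ∃ s ∈ S.Y.faces, (∀ v ∉ s, S.Bfn u' p v = 0) ∧ (∑ v ∈ s, S.Bfn u' p v = 1) ∧
      ∀ v, 0 ≤ S.Bfn u' p v := by
  set P := S.inclY p with hPdef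
  by_cases h : ∃ j ∈ S.I, 0 < P.1 j
  · obtain ⟨i, hi, hp⟩ := h
    by_cases h1 : S.tI P < 1
    · rw [S.Bfn_eq_of u' p hi hp h1, mainB]
      set t := P.1 i with ht
      set u := cl u' with hu
      have hu0 : 0 ≤ u := cl_nonneg u'
      have hu1 : u ≤ 1 := cl_le_one u'
      have ht0 : 0 ≤ t := coord_nonneg P i
      have ht1 : t ≤ 1 := coord_le_one P i
      set w : GR (S.Y.link {i}) := ⟨S.nf P, S.nf_memLink p hi hp h1⟩ with hwdef
      by_cases h2 : t ≤ 1/2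
      · rw [if_pos h2]
        by_cases h4 : u ≤ 1/2
        · rw [if_pos h4]
          exact S.memY_X _ (S.That i hi (cl (2-4*t)) (2*u) w).2
        · push_neg at h4
          rw [if_neg (not_le.mpr h4)]
          exact S.memY_cone hi (by nlinarith) (by nlinarith) w
      · push_neg at h2
        rw [if_neg (not_le.mpr h2)]
        by_cases h3 : t ≤ 3/4
        · rw [if_pos h3]
          exact S.memY_cone hi (hZ3_nonneg h2 h3 hu0 hu1) (hZ3_le_one h2 h3 hu0 hu1) _
        · push_neg at h3
          rw [if_neg (not_le.mpr h3)]
          exact S.memY_cone hi (by nlinarith) (by nlinarith) _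
    · rw [S.Bfn_eq_single u' p hi hp h1]
      exact S.memY_single hi
  · rw [Bfn, dif_neg h]
    exact p.2

end S7Data


namespace S7Data

variable {V : Type} (S : S7Data V)

lemma inclY_coord (p : GR S.Y) (v : V) : (S.inclY p).1 v = p.1 v := rfl

lemma contB_main {i₀ : V} (hi₀ : i₀ ∈ S.I) {z₀ : ℝ × GR S.Y}
    (hp : 0 < (S.inclY z₀.2).1 i₀) (h1 : S.tI (S.inclY z₀.2) < 1) :
    ContinuousAt (fun z : ℝ × GR S.Y => S.Bfn z.1 z.2) z₀ := by
  set U : Set (ℝ × GR S.Y) := {z | 0 < (S.inclY z.2).1 i₀} ∩ {z | S.tI (S.inclY z.2) < 1}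
    with hUdef
  have hincl : Continuous fun z : ℝ × GR S.Y => S.inclY z.2 :=
    (S.inclY).continuous.comp continuous_snd
  have hU : IsOpen U := by
    apply IsOpen.inter
    · exact isOpen_lt continuous_const
        ((continuous_apply i₀).comp (continuous_subtype_val.comp hincl))
    · exact isOpen_lt (S.tI_cont.comp hincl) continuous_const
  refine contAt_of_region hU ?_ (Set.mem_inter hp h1)
  have heq : (fun z : ↥U => S.Bfn z.1.1 z.1.2)
      = fun z : ↥U => S.mainB i₀ hi₀ ((S.inclY z.1.2).1 i₀) (cl z.1.1)
        ⟨S.nf (S.inclY z.1.2), S.nf_memLink z.1.2 hi₀ z.2.1 z.2.2⟩ :=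
    funext fun z => S.Bfn_eq_of z.1.1 z.1.2 hi₀ z.2.1 z.2.2
  rw [heq]
  -- basic continuous ingredients
  have hsub : Continuous fun z : ↥U => S.inclY z.1.2 :=
    hincl.comp continuous_subtype_val
  have ht : Continuous fun z : ↥U => (S.inclY z.1.2).1 i₀ :=
    (continuous_apply i₀).comp (continuous_subtype_val.comp hsub)
  have hur : Continuous fun z : ↥U => z.1.1 :=
    continuous_fst.comp continuous_subtype_val
  have hu : Continuous fun z : ↥U => cl z.1.1 := cl_cont.comp hur
  have hnf : Continuous fun z : ↥U => S.nf (S.inclY z.1.2) := by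
    apply continuous_pi; intro v
    by_cases hv : v ∈ S.I
    · simp only [nf, if_pos hv]; exact continuous_const
    · simp only [nf, if_neg hv]
      apply Continuous.div
      · exact (continuous_apply v).comp (continuous_subtype_val.comp hsub)
      · exact continuous_const.sub (S.tI_cont.comp hsub)
      · intro z
        intro hc
        have : S.tI (S.inclY z.1.2) = 1 := by linarith [sub_eq_zero.mp hc]
        exact absurd this (ne_of_lt z.2.2)
  have hw : Continuous fun z : ↥U =>
      (⟨S.nf (S.inclY z.1.2), S.nf_memLink z.1.2 hi₀ z.2.1 z.2.2⟩
        : GR (S.Y.link {i₀})) := hnf.subtype_mk _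
  set wf := fun z : ↥U =>
    (⟨S.nf (S.inclY z.1.2), S.nf_memLink z.1.2 hi₀ z.2.1 z.2.2⟩ : GR (S.Y.link {i₀}))
    with hwf
  -- branch continuities
  have hbr1a : Continuous fun z : ↥U =>
      (S.That i₀ hi₀ (cl (2-4*(S.inclY z.1.2).1 i₀)) (2*cl z.1.1) (wf z)).1 := by
    apply continuous_subtype_val.comp
    exact (S.That_cont i₀ hi₀).comp
      ((((cl_cont.comp (continuous_const.sub (continuous_const.mul ht))).prodMk
        (continuous_const.mul hu)).prodMk hw))
  have hbr1b : Continuous fun z : ↥U =>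
      coneF i₀ ((S.inclY z.1.2).1 i₀ * (2*cl z.1.1-1)) (S.inL i₀ hi₀ (wf z)).1 :=
    coneF_cont (ht.mul ((continuous_const.mul hu).sub continuous_const))
      (continuous_subtype_val.comp ((S.inL_cont i₀ hi₀).comp hw))
  have hbr2 : Continuous fun z : ↥U =>
      coneF i₀ (hZ3 ((S.inclY z.1.2).1 i₀) (cl z.1.1))
        (S.inL i₀ hi₀ (S.K'v i₀ hi₀ (sZ3 ((S.inclY z.1.2).1 i₀) (cl z.1.1)) (wf z))).1 :=
    coneF_cont (hZ3_cont.comp (ht.prodMk hu))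
      (continuous_subtype_val.comp ((S.inL_cont i₀ hi₀).comp
        ((S.K'v_cont i₀ hi₀).comp ((sZ3_cont.comp (ht.prodMk hu)).prodMk hw))))
  have hbr3 : Continuous fun z : ↥U =>
      coneF i₀ ((1-cl z.1.1)*(2*(S.inclY z.1.2).1 i₀-1)+cl z.1.1*(S.inclY z.1.2).1 i₀)
        (S.inL i₀ hi₀ (S.K'v i₀ hi₀ (cl z.1.1) (wf z))).1 :=
    coneF_cont (((continuous_const.sub hu).mul
        ((continuous_const.mul ht).sub continuous_const)).add (hu.mul ht))
      (continuous_subtype_val.comp ((S.inL_cont i₀ hi₀).comp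
        ((S.K'v_cont i₀ hi₀).comp (hu.prodMk hw))))
  have hbr1 : Continuous fun z : ↥U =>
      (if cl z.1.1 ≤ 1/2 then (S.That i₀ hi₀ (cl (2-4*(S.inclY z.1.2).1 i₀))
          (2*cl z.1.1) (wf z)).1
        else coneF i₀ ((S.inclY z.1.2).1 i₀ * (2*cl z.1.1-1)) (S.inL i₀ hi₀ (wf z)).1) := by
    refine Continuous.if_le hbr1a hbr1b hu continuous_const ?_
    intro z hz
    rw [hz, show (2:ℝ)*(1/2) = 1 by norm_num, S.That_s1 i₀ hi₀]
    simp [coneF_zero]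
  unfold mainB
  refine Continuous.if_le hbr1 (Continuous.if_le hbr2 hbr3 ht continuous_const ?_)
    ht continuous_const ?_
  · -- t = 3/4 junction
    intro z hz
    rw [hz]
    have e1 : hZ3 (3/4) (cl z.1.1) = (1-cl z.1.1)*(2*(3/4)-1)+cl z.1.1*(3/4) := by
      rw [hZ3]; ring
    have e2 : sZ3 (3/4) (cl z.1.1) = cl z.1.1 := by
      rw [sZ3]; ring
    rw [e1, e2]
  · -- t = 1/2 junction
    intro z hz
    rw [hz, if_pos (by norm_num : ((1:ℝ)/2:ℝ) ≤ 3/4)]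
    by_cases hu2 : cl z.1.1 ≤ 1/2
    · rw [if_pos hu2]
      have e0 : cl (2-4*((1:ℝ)/2)) = 0 := by
        rw [show (2:ℝ)-4*(1/2) = 0 by norm_num]; exact cl_zero
      rw [e0, S.That_nu0 i₀ hi₀]
      have e1 : hZ3 (1/2) (cl z.1.1) = 0 := by
        rw [hZ3, hZlow, if_pos hu2]; ring
      have e2 : sZ3 (1/2) (cl z.1.1) = min (2*cl z.1.1) 1 := by
        rw [sZ3]; ring
      rw [e1, e2, coneF_zero, min_eq_left (by linarith)]
    · rw [if_neg hu2]
      push_neg at hu2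
      have e1 : hZ3 (1/2) (cl z.1.1) = (1/2) * (2*cl z.1.1-1) := by
        rw [hZ3, hZlow, if_neg (not_le.mpr hu2)]; ring
      have e2 : sZ3 (1/2) (cl z.1.1) = min (2*cl z.1.1) 1 := by
        rw [sZ3]; ring
      rw [e1, e2, min_eq_right (by linarith), S.K'v_one i₀ hi₀]

end S7Data


namespace S7Data

variable {V : Type} (S : S7Data V)

lemma Bfn_nonneg (u' : ℝ) (p : GR S.Y) (v : V) : 0 ≤ S.Bfn u' p v := by
  obtain ⟨s, _, _, _, hpos⟩ := S.Bfn_memY u' p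
  exact hpos v

lemma Bfn_coord_apexI {i₀ : V} (hi₀ : i₀ ∈ S.I) (u' : ℝ) (p : GR S.Y)
    (hp : 7/8 < (S.inclY p).1 i₀) :
    S.Bfn u' p i₀ = (1-cl u')*(2*(S.inclY p).1 i₀-1) + cl u'*(S.inclY p).1 i₀ := by
  set P := S.inclY p with hPdef
  have hp0 : 0 < P.1 i₀ := by linarith
  by_cases h1 : S.tI P < 1
  · rw [S.Bfn_eq_of u' p hi₀ hp0 h1, mainB, if_neg (by intro hc; linarith), if_neg (by intro hc; linarith)]
    rw [coneF, if_pos rfl]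
    have hz : (S.inL i₀ hi₀ (S.K'v i₀ hi₀ (cl u')
        (⟨S.nf P, S.nf_memLink p hi₀ hp0 h1⟩ : GR (S.Y.link {i₀})))).1 i₀ = 0 :=
      S.L_zero_on_I hi₀ _ hi₀
    rw [hz, mul_zero, add_zero]
  · rw [S.Bfn_eq_single u' p hi₀ hp0 h1]
    have ht1 : S.tI P = 1 := S.tI_eq_one_of_not_lt P h1
    have hpi1 : P.1 i₀ = 1 := by rw [← S.tI_eq P hi₀ hp0]; exact ht1
    rw [singleF, if_pos rfl, hpi1]
    ring

lemma Bfn_le_bound {i₀ : V} (hi₀ : i₀ ∈ S.I) (u' : ℝ) (p : GR S.Y)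
    (hp : 7/8 < (S.inclY p).1 i₀) {v : V} (hv : v ≠ i₀) :
    S.Bfn u' p v ≤ 1 - ((1-cl u')*(2*(S.inclY p).1 i₀-1) + cl u'*(S.inclY p).1 i₀) := by
  have hp0 : 0 < (S.inclY p).1 i₀ := by linarith
  have hcu0 := cl_nonneg u'
  have hcu1 := cl_le_one u'
  have ht1 := coord_le_one (S.inclY p) i₀
  by_cases h1 : S.tI (S.inclY p) < 1
  · rw [S.Bfn_eq_of u' p hi₀ hp0 h1, mainB, if_neg (by intro hc; linarith),
      if_neg (by intro hc; linarith)]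
    rw [coneF, if_neg hv, zero_add]
    have hle : (S.inL i₀ hi₀ (S.K'v i₀ hi₀ (cl u')
        (⟨S.nf (S.inclY p), S.nf_memLink p hi₀ hp0 h1⟩ : GR (S.Y.link {i₀})))).1 v ≤ 1 :=
      coord_le_one _ v
    have hH1 : (1-cl u')*(2*(S.inclY p).1 i₀-1) + cl u'*(S.inclY p).1 i₀ ≤ 1 := by nlinarith
    exact mul_le_of_le_one_right (by linarith) hle
  · rw [S.Bfn_eq_single u' p hi₀ hp0 h1]
    have ht1' : S.tI (S.inclY p) = 1 := S.tI_eq_one_of_not_lt _ h1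
    have hpi1 : (S.inclY p).1 i₀ = 1 := by rw [← S.tI_eq _ hi₀ hp0]; exact ht1'
    rw [singleF, if_neg hv, hpi1]
    nlinarith

lemma contB_apex {i₀ : V} (hi₀ : i₀ ∈ S.I) {z₀ : ℝ × GR S.Y}
    (hp1 : (S.inclY z₀.2).1 i₀ = 1) :
    ContinuousAt (fun z : ℝ × GR S.Y => S.Bfn z.1 z.2) z₀ := by
  have hincl : Continuous fun z : ℝ × GR S.Y => S.inclY z.2 :=
    (S.inclY).continuous.comp continuous_snd
  have hU : IsOpen {z : ℝ × GR S.Y | 7/8 < (S.inclY z.2).1 i₀} :=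
    isOpen_lt continuous_const ((continuous_apply i₀).comp (continuous_subtype_val.comp hincl))
  have hz₀U : z₀ ∈ {z : ℝ × GR S.Y | 7/8 < (S.inclY z.2).1 i₀} := by
    show (7:ℝ)/8 < (S.inclY z₀.2).1 i₀; rw [hp1]; norm_num
  have hmem : {z : ℝ × GR S.Y | 7/8 < (S.inclY z.2).1 i₀} ∈ nhds z₀ := hU.mem_nhds hz₀U
  have hHc : Continuous fun z : ℝ × GR S.Y =>
      (1-cl z.1)*(2*(S.inclY z.2).1 i₀-1) + cl z.1*(S.inclY z.2).1 i₀ := by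
    have hti : Continuous fun z : ℝ × GR S.Y => (S.inclY z.2).1 i₀ :=
      (continuous_apply i₀).comp (continuous_subtype_val.comp hincl)
    have hcu : Continuous fun z : ℝ × GR S.Y => cl z.1 := cl_cont.comp continuous_fst
    exact ((continuous_const.sub hcu).mul ((continuous_const.mul hti).sub
      continuous_const)).add (hcu.mul hti)
  apply continuousAt_pi.mpr
  intro v
  by_cases hvi : v = i₀
  · subst hvi
    have heq : (fun z : ℝ × GR S.Y => S.Bfn z.1 z.2 v) =ᶠ[nhds z₀]
        fun z => (1-cl z.1)*(2*(S.inclY z.2).1 v-1) + cl z.1*(S.inclY z.2).1 v := by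
      filter_upwards [hmem] with z hz
      exact S.Bfn_coord_apexI hi₀ z.1 z.2 hz
    exact (hHc.continuousAt).congr heq.symm
  · have htI1 : ¬ S.tI (S.inclY z₀.2) < 1 := by
      have hcl : (S.inclY z₀.2).1 i₀ ≤ S.tI (S.inclY z₀.2) := S.coord_le_tI _ hi₀
      rw [hp1] at hcl
      intro hc; linarith
    have hval0 : S.Bfn z₀.1 z₀.2 v = 0 := by
      rw [S.Bfn_eq_single z₀.1 z₀.2 hi₀ (by rw [hp1]; norm_num) htI1, singleF, if_neg hvi]
    show ContinuousAt (fun z : ℝ × GR S.Y => S.Bfn z.1 z.2 v) z₀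
    rw [ContinuousAt, hval0]
    have hupper : ∀ᶠ z : ℝ × GR S.Y in nhds z₀, S.Bfn z.1 z.2 v ≤
        1 - ((1-cl z.1)*(2*(S.inclY z.2).1 i₀-1) + cl z.1*(S.inclY z.2).1 i₀) := by
      filter_upwards [hmem] with z hz
      exact S.Bfn_le_bound hi₀ z.1 z.2 hz hvi
    have hlower : ∀ᶠ z : ℝ × GR S.Y in nhds z₀, (0:ℝ) ≤ S.Bfn z.1 z.2 v :=
      Filter.Eventually.of_forall fun z => S.Bfn_nonneg z.1 z.2 v
    have hc1 : Continuous fun z : ℝ × GR S.Y =>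
        (1:ℝ) - ((1-cl z.1)*(2*(S.inclY z.2).1 i₀-1) + cl z.1*(S.inclY z.2).1 i₀) :=
      continuous_const.sub hHc
    have htd := hc1.tendsto z₀
    have h00 : (1:ℝ) - ((1-cl z₀.1)*(2*(S.inclY z₀.2).1 i₀-1)
        + cl z₀.1*(S.inclY z₀.2).1 i₀) = 0 := by
      rw [hp1]; ring
    rw [h00] at htd
    exact tendsto_of_tendsto_of_tendsto_of_le_of_le' tendsto_const_nhds htd hlower hupper

lemma Bfn_eq_lowt (u' : ℝ) (p : GR S.Y) (hlow : S.tI (S.inclY p) < 1/8) :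
    S.Bfn u' p = fun v => if v ∈ S.I then max (2*cl u'-1) 0 * p.1 v
      else (1 - max (2*cl u'-1) 0 * S.tI (S.inclY p)) * p.1 v / (1 - S.tI (S.inclY p)) := by
  set P := S.inclY p with hPdef
  by_cases h : ∃ j ∈ S.I, 0 < P.1 j
  · obtain ⟨i, hi, hp⟩ := h
    have htI : S.tI P = P.1 i := S.tI_eq P hi hp
    have h1 : S.tI P < 1 := by linarith
    rw [S.Bfn_eq_of u' p hi hp h1, mainB]
    set t := P.1 i with htdef
    have ht8 : t < 1/8 := by rw [← htI]; exact hlow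
    have ht0 : 0 ≤ t := coord_nonneg P i
    rw [if_pos (by linarith : t ≤ 1/2)]
    set u := cl u' with hu
    have hu0 : 0 ≤ u := cl_nonneg u'
    have hu1 : u ≤ 1 := cl_le_one u'
    set w : GR (S.Y.link {i}) := ⟨S.nf P, S.nf_memLink p hi hp h1⟩ with hwdef
    have hwv : ∀ v, (S.inL i hi w).1 v = S.nf P v := fun v => rfl
    by_cases h4 : u ≤ 1/2
    · rw [if_pos h4]
      have hν : cl (2-4*t) = 1 := cl_of_one_le (by linarith)
      rw [hν, S.That_nu1 i hi]
      have hmx : max (2*u-1) 0 = 0 := max_eq_right (by linarith)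
      funext v
      rw [hwv v]
      by_cases hvI : v ∈ S.I
      · rw [if_pos hvI]
        simp only [nf, if_pos hvI]
        rw [hmx, zero_mul]
      · rw [if_neg hvI]
        simp only [nf, if_neg hvI]
        rw [hmx]
        have : P.1 v = p.1 v := rfl
        rw [this]
        ring
    · push_neg at h4
      rw [if_neg (not_le.mpr h4)]
      have hmx : max (2*u-1) 0 = 2*u-1 := max_eq_left (by linarith)
      funext v
      rw [coneF]
      by_cases hvi : v = i
      · have hvI' : v ∈ S.I := hvi ▸ hi
        rw [if_pos hvi, if_pos hvI']
        have hz0 : (S.inL i hi w).1 v = 0 := by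
          rw [hwv v]; simp only [nf, if_pos hvI']
        rw [hz0, mul_zero, add_zero, hmx]
        have hpv : p.1 v = t := by rw [htdef, hvi]; rfl
        rw [hpv]
        ring
      · rw [if_neg hvi, zero_add]
        by_cases hvI : v ∈ S.I
        · rw [if_pos hvI]
          have hz : (S.inL i hi w).1 v = 0 := by
            rw [hwv v]; simp only [nf, if_pos hvI]
          have hz' : p.1 v = 0 := S.coordI_eq_zero P hi hp hvI hvi
          rw [hz, hz', mul_zero, mul_zero]
        · rw [if_neg hvI, hwv v]
          simp only [nf, if_neg hvI]
          rw [hmx, htI]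
          have : P.1 v = p.1 v := rfl
          rw [this]
          ring
  · rw [Bfn, dif_neg h]
    have htI : S.tI P = 0 := by rw [tI, dif_neg h]
    push_neg at h
    funext v
    by_cases hvI : v ∈ S.I
    · rw [if_pos hvI]
      have : P.1 v = 0 := le_antisymm (h v hvI) (coord_nonneg P v)
      have hpv : p.1 v = 0 := this
      rw [hpv, mul_zero]
    · rw [if_neg hvI, htI]
      ring

lemma contB_lowt {z₀ : ℝ × GR S.Y} (h0 : S.tI (S.inclY z₀.2) = 0) :
    ContinuousAt (fun z : ℝ × GR S.Y => S.Bfn z.1 z.2) z₀ := by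
  have hincl : Continuous fun z : ℝ × GR S.Y => S.inclY z.2 :=
    (S.inclY).continuous.comp continuous_snd
  set U : Set (ℝ × GR S.Y) := {z | S.tI (S.inclY z.2) < 1/8} with hUdef
  have hU : IsOpen U := isOpen_lt (S.tI_cont.comp hincl) continuous_const
  refine contAt_of_region hU ?_ (by show S.tI (S.inclY z₀.2) < 1/8; rw [h0]; norm_num)
  have heq : (fun z : ↥U => S.Bfn z.1.1 z.1.2)
      = fun z : ↥U => fun v => if v ∈ S.I then max (2*cl z.1.1-1) 0 * z.1.2.1 v
        else (1 - max (2*cl z.1.1-1) 0 * S.tI (S.inclY z.1.2)) * z.1.2.1 v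
          / (1 - S.tI (S.inclY z.1.2)) :=
    funext fun z => S.Bfn_eq_lowt z.1.1 z.1.2 z.2
  rw [heq]
  have hsub : Continuous fun z : ↥U => S.inclY z.1.2 := hincl.comp continuous_subtype_val
  have hval : Continuous fun z : ↥U => z.1.2.1 :=
    continuous_subtype_val.comp (continuous_snd.comp continuous_subtype_val)
  have hmx : Continuous fun z : ↥U => max (2*cl z.1.1-1) 0 :=
    ((continuous_const.mul (cl_cont.comp
      (continuous_fst.comp continuous_subtype_val))).sub continuous_const).max
      continuous_const
  have htIc : Continuous fun z : ↥U => S.tI (S.inclY z.1.2) := S.tI_cont.comp hsub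
  apply continuous_pi; intro v
  by_cases hvI : v ∈ S.I
  · simp only [if_pos hvI]
    exact hmx.mul ((continuous_apply v).comp hval)
  · simp only [if_neg hvI]
    apply Continuous.div
    · exact (continuous_const.sub (hmx.mul htIc)).mul ((continuous_apply v).comp hval)
    · exact continuous_const.sub htIc
    · intro z
      have hlt : S.tI (S.inclY z.1.2) < 1/8 := z.2
      intro hc
      have : S.tI (S.inclY z.1.2) = 1 := by linarith [sub_eq_zero.mp hc]
      linarith

lemma Bfn_cont : Continuous fun z : ℝ × GR S.Y => S.Bfn z.1 z.2 := by
  rw [continuous_iff_continuousAt]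
  intro z₀
  by_cases h : ∃ j ∈ S.I, 0 < (S.inclY z₀.2).1 j
  · obtain ⟨i, hi, hp⟩ := h
    by_cases h1 : S.tI (S.inclY z₀.2) < 1
    · exact S.contB_main hi hp h1
    · have ht1 : S.tI (S.inclY z₀.2) = 1 := S.tI_eq_one_of_not_lt _ h1
      have : (S.inclY z₀.2).1 i = 1 := by rw [← S.tI_eq _ hi hp]; exact ht1
      exact S.contB_apex hi this
  · have : S.tI (S.inclY z₀.2) = 0 := by rw [tI, dif_neg h]
    exact S.contB_lowt this

/-- The homotopy `B` from `r ∘ j` to the identity of `GR Y`. -/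
noncomputable def HomB : ContinuousMap.Homotopy (S.rC.comp (inclGR S.hYsub))
    (ContinuousMap.id (GR S.Y)) where
  toFun z := ⟨S.Bfn z.1.1 z.2, S.Bfn_memY z.1.1 z.2⟩
  continuous_toFun := by
    apply Continuous.subtype_mk
    exact S.Bfn_cont.comp ((continuous_subtype_val.comp continuous_fst).prodMk continuous_snd)
  map_zero_left p := by
    apply Subtype.ext
    show S.Bfn ((0 : unitInterval) : ℝ) p = _
    rw [show ((0 : unitInterval) : ℝ) = 0 from rfl, S.Bfn_zero p]
    rfl
  map_one_left p := by
    apply Subtype.ext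
    show S.Bfn ((1 : unitInterval) : ℝ) p = p.1
    rw [show ((1 : unitInterval) : ℝ) = 1 from rfl]
    exact S.Bfn_one p

/-- The main construction. -/
theorem main : IsHEquiv (inclGR S.hYsub) :=
  ⟨S.rC, ⟨S.HomA⟩, ⟨S.HomB⟩⟩

end S7Data

open AbsSC in
/-- Brendle–Broaddus–Putman, Lemma 4.1.  Let `X` be a simplicial complex,
`I` a discrete set of vertices (disjoint from the vertices of `X`), and `Y ⊆ I * X` a
subcomplex containing both `I` and `X`.  If for every `i ∈ I` the inclusion
`lk_Y(i) ↪ X` is a homotopy equivalence, then the inclusion `Y ↪ I * X` is a homotopy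
equivalence. -/
theorem stmt_7 {V : Type} (X : AbsSC V) (I : Set V)
    (hdisj : ∀ v ∈ I, v ∉ X.vertexSet)
    (Y : AbsSC V) (hYsub : Y.faces ⊆ (joinDisc I X).faces)
    (hI : ∀ i ∈ I, ({i} : Finset V) ∈ Y.faces) (hX : X.faces ⊆ Y.faces)
    (hlink : ∀ i ∈ I, ∃ hsub : (Y.link {i}).faces ⊆ X.faces, IsHEquiv (inclGR hsub)) :
    IsHEquiv (inclGR hYsub) := by
  have hEq : ∀ i, (hi : i ∈ I) → IsHEquiv (inclGR ((hlink i hi).choose)) :=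
    fun i hi => (hlink i hi).choose_spec
  exact S7Data.main
    { X := X, I := I, Y := Y, hdisj := hdisj, hYsub := hYsub, hI := hI, hX := hX,
      hsub := fun i hi => (hlink i hi).choose,
      gm := fun i hi => (hEq i hi).choose,
      Gh := fun i hi => ((hEq i hi).choose_spec.1).some,
      Kh := fun i hi => ((hEq i hi).choose_spec.2).some }
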